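/- arXiv:2209.12275 — 6 statements merged into one kernel-verified Lean document; each statement's English description precedes it below -/
import Mathlib

section
/- In any linear double change covering design DCCD(v,k,t,b), the number of blocks satisfies b ≥ ⌈(C(v,t) - C(k,t)) / (2·C(k-2,t-1) + C(k-2,t-2))⌉ + 1, where C denotes binomial coefficients. -/
/-- Chain bound: the union of a chain of sets is bounded by the first set plus
the successive differences. -/
lemma dccd_chain_bound {α : Type*} [DecidableEq α] (A : ℕ → Finset α) (n : ℕ) :
    ((Finset.range (n + 1)).biUnion A).card
      ≤ (A 0).card + ∑ i ∈ Finset.range n, (A (i + 1) \ A i).card := by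
  induction n with
  | zero => simp
  | succ n ih =>
    rw [Finset.range_add_one, Finset.biUnion_insert]
    have hsub : A n ⊆ (Finset.range (n + 1)).biUnion A :=
      Finset.subset_biUnion_of_mem A (by simp)
    calc (A (n + 1) ∪ (Finset.range (n + 1)).biUnion A).card
        = (A (n + 1) \ (Finset.range (n + 1)).biUnion A).card
            + ((Finset.range (n + 1)).biUnion A).card := by
          rw [Finset.card_sdiff_add_card]
      _ ≤ (A (n + 1) \ A n).card + ((Finset.range (n + 1)).biUnion A).card := by
          gcongr
      _ ≤ (A (n + 1) \ A n).card
            + ((A 0).card + ∑ i ∈ Finset.range n, (A (i + 1) \ A i).card) := by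
          gcongr
      _ = (A 0).card + ∑ i ∈ Finset.range (n + 1), (A (i + 1) \ A i).card := by
          rw [Finset.sum_range_succ]; ring

/-- Pascal-type bound with truncated subtraction. -/
lemma dccd_choose_bound (k t : ℕ) :
    Nat.choose k t ≤ Nat.choose (k - 2) t
      + (2 * Nat.choose (k - 2) (t - 1) + Nat.choose (k - 2) (t - 2)) := by
  match k, t with
  | 0, t => simp
  | 1, 0 => simp
  | 1, 1 => simp
  | 1, (s + 2) => simp [Nat.choose_eq_zero_of_lt]
  | (m + 2), 0 => simp
  | (m + 2), 1 =>
    simp only [Nat.add_sub_cancel, Nat.sub_self, show (1:ℕ) - 2 = 0 by omega,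
      Nat.choose_one_right, Nat.choose_zero_right]
    omega
  | (m + 2), (s + 2) =>
    have h : (m + 2).choose (s + 2) = m.choose (s + 2) + 2 * m.choose (s + 1) + m.choose s := by
      rw [Nat.choose_succ_succ (m + 1), Nat.choose_succ_succ m (s + 1),
        Nat.choose_succ_succ m s]
      ring
    simp only [Nat.add_sub_cancel, show s + 2 - 2 = s by omega, show s + 2 - 1 = s + 1 by omega]
    omega

/-- Lower bound on the number of blocks of a linear double change covering design
`DCCD(v,k,t,b)`:  `b ≥ ⌈(C(v,t) - C(k,t)) / (2·C(k-2,t-1) + C(k-2,t-2))⌉ + 1`. -/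
theorem dccd_linear_lower_bound (v k t b : ℕ) (B : ℕ → Finset (Fin v))
    (hb : 1 ≤ b)
    (hcard : ∀ i < b, (B i).card = k)
    (hchange : ∀ i, i + 1 < b → (B i ∩ B (i + 1)).card = k - 2)
    (hcover : ∀ T : Finset (Fin v), T.card = t → ∃ i < b, T ⊆ B i) :
    b ≥ (Nat.choose v t - Nat.choose k t
          + (2 * Nat.choose (k - 2) (t - 1) + Nat.choose (k - 2) (t - 2)) - 1)
        / (2 * Nat.choose (k - 2) (t - 1) + Nat.choose (k - 2) (t - 2)) + 1 := by
  set D := 2 * Nat.choose (k - 2) (t - 1) + Nat.choose (k - 2) (t - 2) with hD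
  obtain ⟨n, rfl⟩ : ∃ n, b = n + 1 := ⟨b - 1, by omega⟩
  set A : ℕ → Finset (Finset (Fin v)) := fun i => Finset.powersetCard t (B i) with hA
  -- every t-subset of the universe lies in the union
  have h1 : Nat.choose v t ≤ ((Finset.range (n + 1)).biUnion A).card := by
    have hcv : Nat.choose v t
        = (Finset.powersetCard t (Finset.univ : Finset (Fin v))).card := by
      rw [Finset.card_powersetCard, Finset.card_univ, Fintype.card_fin]
    rw [hcv]
    apply Finset.card_le_card
    intro T hT
    rw [Finset.mem_powersetCard] at hT
    obtain ⟨i, hib, hTi⟩ := hcover T hT.2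
    rw [Finset.mem_biUnion]
    exact ⟨i, Finset.mem_range.mpr hib, Finset.mem_powersetCard.mpr ⟨hTi, hT.2⟩⟩
  -- chain bound
  have h2 : ((Finset.range (n + 1)).biUnion A).card ≤ Nat.choose k t + n * D := by
    refine (dccd_chain_bound A n).trans ?_
    have hA0 : (A 0).card = Nat.choose k t := by
      rw [hA]; simp only [Finset.card_powersetCard]
      rw [hcard 0 (by omega)]
    rw [hA0]
    gcongr
    calc ∑ i ∈ Finset.range n, (A (i + 1) \ A i).card
        ≤ ∑ i ∈ Finset.range n, D := by
          apply Finset.sum_le_sum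
          intro i hi
          rw [Finset.mem_range] at hi
          have hsub : Finset.powersetCard t (B i ∩ B (i + 1)) ⊆ A i := by
            rw [hA]
            exact Finset.powersetCard_mono Finset.inter_subset_left
          have hsub2 : A (i + 1) \ A i
              ⊆ A (i + 1) \ Finset.powersetCard t (B i ∩ B (i + 1)) :=
            Finset.sdiff_subset_sdiff le_rfl hsub
          have hsub3 : Finset.powersetCard t (B i ∩ B (i + 1)) ⊆ A (i + 1) := by
            rw [hA]
            exact Finset.powersetCard_mono Finset.inter_subset_right
          have hcd : (A (i + 1) \ Finset.powersetCard t (B i ∩ B (i + 1))).card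
              = (A (i + 1)).card - (Finset.powersetCard t (B i ∩ B (i + 1))).card :=
            Finset.card_sdiff_of_subset hsub3
          have hA1 : (A (i + 1)).card = Nat.choose k t := by
            rw [hA]; simp only [Finset.card_powersetCard]
            rw [hcard (i + 1) (by omega)]
          have hA2 : (Finset.powersetCard t (B i ∩ B (i + 1))).card
              = Nat.choose (k - 2) t := by
            simp only [Finset.card_powersetCard]
            rw [hchange i (by omega)]
          have hpas := dccd_choose_bound k t
          calc (A (i + 1) \ A i).card
              ≤ (A (i + 1) \ Finset.powersetCard t (B i ∩ B (i + 1))).card :=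
                Finset.card_le_card hsub2
            _ = Nat.choose k t - Nat.choose (k - 2) t := by rw [hcd, hA1, hA2]
            _ ≤ D := by omega
      _ = n * D := by rw [Finset.sum_const, Finset.card_range, smul_eq_mul]
  have hX : Nat.choose v t - Nat.choose k t ≤ n * D := by omega
  rcases Nat.eq_zero_or_pos D with hD0 | hDpos
  · rw [hD0]
    simp
  · have hle : Nat.choose v t - Nat.choose k t + D - 1 ≤ D - 1 + n * D := by omega
    have h3 := Nat.div_le_div_right (c := D) hle
    rw [Nat.add_mul_div_right _ _ hDpos,
      Nat.div_eq_of_lt (Nat.sub_lt hDpos Nat.one_pos)] at h3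
    omega
end

section
/- If a circular double change covering design on v = 2k-2 points with blocks of size k has exactly k-1 blocks and covers every pair exactly once (i.e., is tight), then k must be even. -/
/-!
Fix a point `x`. Tightness partitions the `2k - 3` pairs `{x, y}` according to the block
covering them. A block not containing `x` covers none of them; a block introducing `x` covers
`k - 1` of them; a block in which `x` persists covers exactly the two pairs formed with the two
newly introduced points. If `k` were odd, every block would contribute an even number, while
`2k - 3` is odd.
-/

open Finset

lemma add_sub_one_mod_add_one_mod {m i : ℕ} (hi : i < m) :
    ((i + m - 1) % m + 1) % m = i := by
  rcases i with _ | i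
  · rw [Nat.zero_add, Nat.mod_eq_of_lt (show m - 1 < m by omega), Nat.sub_add_cancel hi,
      Nat.mod_self]
  · rw [show i + 1 + m - 1 = i + m by omega, Nat.add_mod_right,
      Nat.mod_eq_of_lt (show i < m by omega), Nat.mod_eq_of_lt hi]

lemma card_eq_sum_card_of_existsUnique {α ι : Type*} [DecidableEq α] {s : Finset α}
    {t : Finset ι} {f : ι → Finset α} (hf : ∀ i ∈ t, f i ⊆ s)
    (h : ∀ a ∈ s, ∃! i, i ∈ t ∧ a ∈ f i) :
    #s = ∑ i ∈ t, #(f i) := by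
  have hdisj : (t : Set ι).PairwiseDisjoint f := by
    intro i hi j hj hij
    refine disjoint_left.mpr fun a hai haj => hij ?_
    obtain ⟨_, _, huniq⟩ := h a (hf i hi hai)
    exact (huniq i ⟨hi, hai⟩).trans (huniq j ⟨hj, haj⟩).symm
  rw [← card_biUnion hdisj]
  congr 1
  ext a
  refine ⟨fun ha => ?_, fun ha => ?_⟩
  · obtain ⟨i, ⟨hi, hai⟩, -⟩ := h a ha
    exact mem_biUnion.mpr ⟨i, hi, hai⟩
  · obtain ⟨i, hi, hai⟩ := mem_biUnion.mp ha
    exact hf i hi hai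

lemma card_sdiff_eq_two {α : Type*} [DecidableEq α] {A P : Finset α} {k : ℕ} (hk : 2 ≤ k)
    (hA : #A = k) (hAP : #(P ∩ A) = k - 2) : #(A \ P) = 2 := by
  have := card_sdiff_add_card_inter A P
  rw [inter_comm] at hAP
  omega

section NewPartners

variable {α : Type*} [DecidableEq α]

/-- The partners of `x` in the pairs that block `A` covers when it follows block `P`. -/
def newPartners (x : α) (A P : Finset α) : Finset α :=
  {y ∈ A.erase x | x ∈ A ∧ (x ∉ P ∨ y ∉ P)}

variable {x y : α} {A P : Finset α}

lemma newPartners_subset_erase (x : α) (A P : Finset α) : newPartners x A P ⊆ A.erase x :=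
  filter_subset _ _

lemma mem_newPartners :
    y ∈ newPartners x A P ↔ y ≠ x ∧ {x, y} ⊆ A ∧ ∃ z ∈ ({x, y} : Finset α), z ∉ P := by
  simp only [newPartners, mem_filter, mem_erase, insert_subset_iff, singleton_subset_iff,
    mem_insert, mem_singleton, exists_eq_or_imp, exists_eq_left]
  tauto

lemma even_card_newPartners (hA : Odd #A) (hAP : Even #(A \ P)) :
    Even #(newPartners x A P) := by
  by_cases hxA : x ∈ A
  · by_cases hxP : x ∈ P
    · have : newPartners x A P = A \ P := by
        ext y
        simp only [newPartners, mem_filter, mem_erase, mem_sdiff]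
        constructor
        · rintro ⟨⟨-, hyA⟩, -, hxy⟩
          exact ⟨hyA, hxy.resolve_left (not_not_intro hxP)⟩
        · rintro ⟨hyA, hyP⟩
          exact ⟨⟨fun hyx => hyP (hyx ▸ hxP), hyA⟩, hxA, Or.inr hyP⟩
      rwa [this]
    · have : newPartners x A P = A.erase x := filter_true_of_mem fun _ _ => ⟨hxA, Or.inl hxP⟩
      rw [this, card_erase_of_mem hxA]
      exact Nat.Odd.sub_odd hA odd_one
  · have : newPartners x A P = ∅ := filter_false_of_mem fun _ _ h => hxA h.1
    rw [this, card_empty]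
    exact .zero

end NewPartners

lemma even_card_erase_of_tight {α : Type*} [Fintype α] [DecidableEq α] {m : ℕ}
    (B : ℕ → Finset α) (hodd : ∀ i < m, Odd #(B i))
    (hintro : ∀ i < m, Even #(B i \ B ((i + m - 1) % m)))
    (htight : ∀ T : Finset α, #T = 2 →
      ∃! i, i < m ∧ T ⊆ B i ∧ ∃ x ∈ T, x ∉ B ((i + m - 1) % m))
    (x : α) : Even #(univ.erase x) := by
  have hpartition : #(univ.erase x) =
      ∑ i ∈ range m, #(newPartners x (B i) (B ((i + m - 1) % m))) := by
    refine card_eq_sum_card_of_existsUnique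
      (fun i _ => (newPartners_subset_erase _ _ _).trans (erase_subset_erase _ (subset_univ _)))
      fun y hy => ?_
    have hyx : y ≠ x := ne_of_mem_erase hy
    simpa only [mem_range, mem_newPartners, hyx, ne_eq, not_false_eq_true, true_and]
      using htight {x, y} (card_pair hyx.symm)
  rw [hpartition]
  exact even_sum _ fun i hi =>
    even_card_newPartners (hodd i (mem_range.mp hi)) (hintro i (mem_range.mp hi))

/-- If a circular double change covering design on `v = 2k-2` points with blocks of size `k`
has exactly `k-1` blocks and covers every pair exactly once (is tight), then `k` is even.
A pair is covered at block `i` when it lies in `B i` and one of its elements is introduced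
there, i.e. is absent from the (cyclically) previous block. -/
theorem tight_cdccd_2k_sub_2_even (k : ℕ) (hk : 2 ≤ k)
    (B : ℕ → Finset (Fin (2 * k - 2)))
    (hcard : ∀ i < k - 1, (B i).card = k)
    (hchange : ∀ i < k - 1, (B i ∩ B ((i + 1) % (k - 1))).card = k - 2)
    (htight : ∀ T : Finset (Fin (2 * k - 2)), T.card = 2 →
      ∃! i, i < k - 1 ∧ T ⊆ B i ∧ ∃ x ∈ T, x ∉ B ((i + (k - 1) - 1) % (k - 1))) :
    Even k := by
  by_contra hk_even
  rw [Nat.not_even_iff_odd] at hk_even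
  have hintro : ∀ i < k - 1, Even #(B i \ B ((i + (k - 1) - 1) % (k - 1))) := by
    intro i hi
    have hprev := hchange ((i + (k - 1) - 1) % (k - 1)) (Nat.mod_lt _ (by omega))
    rw [add_sub_one_mod_add_one_mod hi] at hprev
    rw [card_sdiff_eq_two hk (hcard i hi) hprev]
    exact even_two
  have hpoints := even_card_erase_of_tight B (fun i hi => (hcard i hi).symm ▸ hk_even) hintro htight
    ⟨0, by omega⟩
  rw [card_erase_of_mem (mem_univ _), card_univ, Fintype.card_fin] at hpoints
  obtain ⟨c, hc⟩ := hpoints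
  omega
end

section
/- Let k ≥ 3 and set v = 4k - 5 (the case c = 1). The block B = {0,1,...,k-3} ∪ {k-2, 2(k-2)+1} in Z_v has the property that the set of differences ±(y - x) for x ∈ B \ {k-2, 2(k-2)+1} and y ∈ {k-2, 2(k-2)+1}, together with ±((2(k-2)+1) - (k-2)), covers every nonzero residue of Z_{4k-5} exactly once. -/
/-!
With `a = k - 2`, `b = 2k - 3` and `v = 4k - 5`, the differences `a - j` (`j < a`) give
`1, …, a`, then `b - a = a + 1`, and `b - j` gives `a + 2, …, b`; so the positive differences
are exactly `1, …, (v - 1) / 2` and their negatives fill the other half of `ℤ/v`. As the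
multiset has `v - 1` elements, each nonzero residue occurs exactly once.
-/

/-- The multiset of signed differences contributed by the base block
`{0,1,...,k-3} ∪ {k-2, 2(k-2)+1}` in `ℤ/(4k-5)`: `±(y - j)` for each introduced
element `y ∈ {k-2, 2(k-2)+1}` and each `j ∈ {0,...,k-3}`, together with
`±((2(k-2)+1) - (k-2))`. -/
def baseBlockDiffs (k : ℕ) : Multiset (ZMod (4 * k - 5)) :=
  ({((2 * (k - 2) + 1 : ℕ) : ZMod (4 * k - 5)) - ((k - 2 : ℕ) : ZMod (4 * k - 5)),
    ((k - 2 : ℕ) : ZMod (4 * k - 5)) - ((2 * (k - 2) + 1 : ℕ) : ZMod (4 * k - 5))} :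
      Multiset (ZMod (4 * k - 5))) +
  (Finset.range (k - 2)).val.bind (fun j =>
    ({((k - 2 : ℕ) : ZMod (4 * k - 5)) - (j : ZMod (4 * k - 5)),
      (j : ZMod (4 * k - 5)) - ((k - 2 : ℕ) : ZMod (4 * k - 5)),
      ((2 * (k - 2) + 1 : ℕ) : ZMod (4 * k - 5)) - (j : ZMod (4 * k - 5)),
      (j : ZMod (4 * k - 5)) - ((2 * (k - 2) + 1 : ℕ) : ZMod (4 * k - 5))} :
        Multiset (ZMod (4 * k - 5))))

theorem Multiset.count_eq_one_of_forall_mem_of_card_le {α : Type*} [DecidableEq α]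
    {s : Multiset α} {t : Finset α} (hmem : ∀ a ∈ t, a ∈ s) (hcard : Multiset.card s ≤ t.card)
    {a : α} (ha : a ∈ t) : s.count a = 1 := by
  have hle : t.val ≤ s := (Multiset.le_iff_subset t.nodup).2 hmem
  rw [← Multiset.eq_of_le_of_card_le hle hcard]
  exact Multiset.count_eq_one_of_mem t.nodup ha

section baseBlockDiffs

variable {k : ℕ}

theorem card_baseBlockDiffs (hk : 2 ≤ k) : Multiset.card (baseBlockDiffs k) = 4 * k - 6 := by
  simp only [baseBlockDiffs, Multiset.insert_eq_cons, Multiset.bind_cons, Finset.range_val,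
    Multiset.bind_singleton, Multiset.cons_add, Multiset.singleton_add, Multiset.card_cons,
    Multiset.card_add, Multiset.card_map, Multiset.card_range]
  omega

theorem neg_mem_baseBlockDiffs {x : ZMod (4 * k - 5)} (hx : x ∈ baseBlockDiffs k) :
    -x ∈ baseBlockDiffs k := by
  simp only [baseBlockDiffs, Multiset.mem_add, Multiset.mem_bind, Finset.mem_val,
    Finset.mem_range, Multiset.insert_eq_cons, Multiset.mem_cons, Multiset.mem_singleton] at hx ⊢
  rcases hx with (rfl | rfl) | ⟨j, hj, rfl | rfl | rfl | rfl⟩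
  · exact Or.inl (Or.inr (neg_sub _ _))
  · exact Or.inl (Or.inl (neg_sub _ _))
  · exact Or.inr ⟨j, hj, Or.inr (Or.inl (neg_sub _ _))⟩
  · exact Or.inr ⟨j, hj, Or.inl (neg_sub _ _)⟩
  · exact Or.inr ⟨j, hj, Or.inr (Or.inr (Or.inr (neg_sub _ _)))⟩
  · exact Or.inr ⟨j, hj, Or.inr (Or.inr (Or.inl (neg_sub _ _)))⟩

theorem natCast_mem_baseBlockDiffs {n : ℕ} (hn : 1 ≤ n) (hn' : n ≤ 2 * k - 3) :
    (n : ZMod (4 * k - 5)) ∈ baseBlockDiffs k := by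
  simp only [baseBlockDiffs, Multiset.mem_add, Multiset.mem_bind, Finset.mem_val,
    Finset.mem_range, Multiset.insert_eq_cons, Multiset.mem_cons, Multiset.mem_singleton]
  have hsub : ∀ a j : ℕ, j ≤ a → (n = a - j) →
      (n : ZMod (4 * k - 5)) = (a : ZMod (4 * k - 5)) - j := by
    intro a j hj rfl
    rw [Nat.cast_sub hj]
  rcases lt_trichotomy n (k - 1) with h | h | h
  · exact Or.inr ⟨k - 2 - n, by omega, Or.inl (hsub _ _ (by omega) (by omega))⟩
  · exact Or.inl (Or.inl (hsub _ _ (by omega) (by omega)))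
  · exact Or.inr ⟨2 * k - 3 - n, by omega,
      Or.inr (Or.inr (Or.inl (hsub _ _ (by omega) (by omega))))⟩

theorem mem_baseBlockDiffs_of_ne_zero (hk : 3 ≤ k) {g : ZMod (4 * k - 5)} (hg : g ≠ 0) :
    g ∈ baseBlockDiffs k := by
  have : NeZero (4 * k - 5) := ⟨by omega⟩
  have hpos : 1 ≤ g.val := Nat.one_le_iff_ne_zero.2 ((ZMod.val_ne_zero g).2 hg)
  have hlt : g.val < 4 * k - 5 := ZMod.val_lt g
  by_cases hsmall : g.val ≤ 2 * k - 3
  · simpa using natCast_mem_baseBlockDiffs (k := k) hpos hsmall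
  · have hneg : -g = ((4 * k - 5 - g.val : ℕ) : ZMod (4 * k - 5)) := by
      rw [Nat.cast_sub hlt.le, ZMod.natCast_self, ZMod.natCast_zmod_val, zero_sub]
    have hnegmem := natCast_mem_baseBlockDiffs (k := k) (n := 4 * k - 5 - g.val)
      (by omega) (by omega)
    rw [← hneg] at hnegmem
    simpa using neg_mem_baseBlockDiffs hnegmem

end baseBlockDiffs

/-- For `k ≥ 3` and `v = 4k - 5`, the differences of the base block
`{0,…,k-3, k-2, 2(k-2)+1}` involving an introduced element cover every nonzero
residue of `ℤ/(4k-5)` exactly once. -/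
theorem base_block_covers_all_differences (k : ℕ) (hk : 3 ≤ k) :
    ∀ g : ZMod (4 * k - 5), g ≠ 0 → (baseBlockDiffs k).count g = 1 := by
  have : NeZero (4 * k - 5) := ⟨by omega⟩
  intro g hg
  refine Multiset.count_eq_one_of_forall_mem_of_card_le (t := Finset.univ.erase 0)
    (fun a ha => mem_baseBlockDiffs_of_ne_zero hk (Finset.ne_of_mem_erase ha)) ?_
    (Finset.mem_erase.2 ⟨hg, Finset.mem_univ g⟩)
  rw [card_baseBlockDiffs (by omega), Finset.card_erase_of_mem (Finset.mem_univ _),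
    Finset.card_univ, ZMod.card]
  omega
end

section
/- For k ≥ 3 and v = 2(4k-6)+1 = 8k-11, the multiset ±{5(k-2)+2-2(k-2)} ∪ ±{2(k-2)-j : 0 ≤ j ≤ k-3} ∪ ±{5(k-2)+2-j : 0 ≤ j ≤ k-3} ∪ ±{3(k-2)+1-(k-2)} ∪ ±{(k-2)-j : 0 ≤ j ≤ k-3} ∪ ±{3(k-2)+1-j : 0 ≤ j ≤ k-3} of signed differences, generated by the two base blocks {0,1,2(k-2),5(k-2)+2} and {0,1,(k-2),3(k-2)+1}, equals the set of all nonzero residues of Z_{8k-11}, each appearing exactly once. -/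
def shiftMap (c n : ℕ) : Multiset ℕ := (Multiset.range n).map (fun j => c + j)

lemma shiftMap_zero (c : ℕ) : shiftMap c 0 = 0 := rfl

lemma shiftMap_one (c : ℕ) : shiftMap c 1 = {c} := by simp [shiftMap]

lemma shiftMap_succ (c n : ℕ) : shiftMap c (n+1) = (c+n) ::ₘ shiftMap c n := by
  simp [shiftMap, Multiset.range_succ]

lemma shiftMap_add (c p q : ℕ) : shiftMap c (p+q) = shiftMap c p + shiftMap (c+p) q := by
  induction q with
  | zero => simp [shiftMap_zero]
  | succ q ih =>
      have h : p + (q+1) = (p+q)+1 := by omega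
      rw [h, shiftMap_succ, ih, shiftMap_succ, Multiset.add_cons]
      ring_nf

lemma shiftMap_split (c p q n c' : ℕ) (hn : n = p + q) (hc' : c' = c + p) :
    shiftMap c n = shiftMap c p + shiftMap c' q := by
  subst hn; subst hc'; exact shiftMap_add c p q

lemma rev_map (n a : ℕ) (h : n ≤ a + 1) :
    (Multiset.range n).map (fun j => a - j) = shiftMap (a + 1 - n) n := by
  induction n with
  | zero => simp [shiftMap_zero]
  | succ n ih =>
      rw [Multiset.range_succ, Multiset.map_cons, ih (by omega)]
      have h1 : a + 1 - (n+1) = a - n := by omega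
      have h2 : (a - n) + 1 = a + 1 - n := by omega
      have h3 : shiftMap (a-n) (1+n) = shiftMap (a-n) 1 + shiftMap (a-n+1) n :=
        shiftMap_add _ _ _
      rw [h1, show n+1 = 1+n by omega, h3, shiftMap_one, h2, Multiset.singleton_add]

def natBlock1 (m : ℕ) : Multiset ℕ :=
  ({3*m+2, 5*m+3} : Multiset ℕ) +
  (Multiset.range m).bind (fun j => ({2*m-j, 6*m+5+j, 5*m+2-j, 3*m+3+j} : Multiset ℕ))

def natBlock2 (m : ℕ) : Multiset ℕ :=
  ({2*m+1, 6*m+4} : Multiset ℕ) +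
  (Multiset.range m).bind (fun j => ({m-j, 7*m+5+j, 3*m+1-j, 5*m+4+j} : Multiset ℕ))

lemma natBlocks_eq (m : ℕ) : natBlock1 m + natBlock2 m = shiftMap 1 (8*m+4) := by
  have hb1 : (Multiset.range m).bind
      (fun j => ({2*m-j, 6*m+5+j, 5*m+2-j, 3*m+3+j} : Multiset ℕ))
      = shiftMap (m+1) m + shiftMap (6*m+5) m + shiftMap (4*m+3) m + shiftMap (3*m+3) m := by
    have hc : ∀ j ∈ Multiset.range m,
        ({2*m-j, 6*m+5+j, 5*m+2-j, 3*m+3+j} : Multiset ℕ)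
          = ({2*m-j} + ({6*m+5+j} + ({5*m+2-j} + {3*m+3+j}))) := by
      intro j _; rfl
    rw [Multiset.bind_congr hc, Multiset.bind_add, Multiset.bind_add, Multiset.bind_add,
        Multiset.bind_singleton, Multiset.bind_singleton, Multiset.bind_singleton,
        Multiset.bind_singleton,
        rev_map m (2*m) (by omega), rev_map m (5*m+2) (by omega),
        show 2*m+1-m = m+1 by omega, show 5*m+2+1-m = 4*m+3 by omega]
    show shiftMap (m+1) m + (shiftMap (6*m+5) m + (shiftMap (4*m+3) m + shiftMap (3*m+3) m))
        = _
    abel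
  have hb2 : (Multiset.range m).bind
      (fun j => ({m-j, 7*m+5+j, 3*m+1-j, 5*m+4+j} : Multiset ℕ))
      = shiftMap 1 m + shiftMap (7*m+5) m + shiftMap (2*m+2) m + shiftMap (5*m+4) m := by
    have hc : ∀ j ∈ Multiset.range m,
        ({m-j, 7*m+5+j, 3*m+1-j, 5*m+4+j} : Multiset ℕ)
          = ({m-j} + ({7*m+5+j} + ({3*m+1-j} + {5*m+4+j}))) := by
      intro j _; rfl
    rw [Multiset.bind_congr hc, Multiset.bind_add, Multiset.bind_add, Multiset.bind_add,
        Multiset.bind_singleton, Multiset.bind_singleton, Multiset.bind_singleton,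
        Multiset.bind_singleton,
        rev_map m m (by omega), rev_map m (3*m+1) (by omega),
        show m+1-m = 1 by omega, show 3*m+1+1-m = 2*m+2 by omega]
    show shiftMap 1 m + (shiftMap (7*m+5) m + (shiftMap (2*m+2) m + shiftMap (5*m+4) m)) = _
    abel
  rw [natBlock1, natBlock2, hb1, hb2,
      shiftMap_split 1 m (7*m+4) (8*m+4) (m+1) (by omega) (by omega),
      shiftMap_split (m+1) m (6*m+4) (7*m+4) (2*m+1) (by omega) (by omega),
      shiftMap_split (2*m+1) 1 (6*m+3) (6*m+4) (2*m+2) (by omega) (by omega),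
      shiftMap_split (2*m+2) m (5*m+3) (6*m+3) (3*m+2) (by omega) (by omega),
      shiftMap_split (3*m+2) 1 (5*m+2) (5*m+3) (3*m+3) (by omega) (by omega),
      shiftMap_split (3*m+3) m (4*m+2) (5*m+2) (4*m+3) (by omega) (by omega),
      shiftMap_split (4*m+3) m (3*m+2) (4*m+2) (5*m+3) (by omega) (by omega),
      shiftMap_split (5*m+3) 1 (3*m+1) (3*m+2) (5*m+4) (by omega) (by omega),
      shiftMap_split (5*m+4) m (2*m+1) (3*m+1) (6*m+4) (by omega) (by omega),
      shiftMap_split (6*m+4) 1 (2*m) (2*m+1) (6*m+5) (by omega) (by omega),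
      shiftMap_split (6*m+5) m m (2*m) (7*m+5) (by omega) (by omega),
      shiftMap_one, shiftMap_one, shiftMap_one, shiftMap_one]
  simp only [Multiset.insert_eq_cons, ← Multiset.singleton_add]
  abel

lemma block1_cast (v m : ℕ) (h0 : ((8*m+5 : ℕ) : ZMod v) = 0) :
    (({((5*m+2 : ℕ) : ZMod v) - ((2*m : ℕ) : ZMod v),
       ((2*m : ℕ) : ZMod v) - ((5*m+2 : ℕ) : ZMod v)} : Multiset (ZMod v)) +
      (Multiset.range m).bind (fun j =>
        ({((2*m : ℕ) : ZMod v) - (j : ZMod v), (j : ZMod v) - ((2*m : ℕ) : ZMod v),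
          ((5*m+2 : ℕ) : ZMod v) - (j : ZMod v), (j : ZMod v) - ((5*m+2 : ℕ) : ZMod v)} :
          Multiset (ZMod v))))
    = (natBlock1 m).map (fun n : ℕ => (n : ZMod v)) := by
  push_cast at h0
  rw [natBlock1, Multiset.map_add, Multiset.map_bind]
  congr 1
  · have e1 : ((5*m+2 : ℕ) : ZMod v) - ((2*m : ℕ) : ZMod v) = ((3*m+2 : ℕ) : ZMod v) := by
      push_cast; ring
    have e2 : ((2*m : ℕ) : ZMod v) - ((5*m+2 : ℕ) : ZMod v) = ((5*m+3 : ℕ) : ZMod v) := by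
      push_cast; linear_combination -h0
    rw [e1, e2]; simp
  · refine Multiset.bind_congr ?_
    intro j hj
    rw [Multiset.mem_range] at hj
    have e3 : ((2*m : ℕ) : ZMod v) - (j : ZMod v) = ((2*m - j : ℕ) : ZMod v) := by
      rw [Nat.cast_sub (by omega)]
    have e4 : (j : ZMod v) - ((2*m : ℕ) : ZMod v) = ((6*m+5+j : ℕ) : ZMod v) := by
      push_cast; linear_combination -h0
    have e5 : ((5*m+2 : ℕ) : ZMod v) - (j : ZMod v) = ((5*m+2 - j : ℕ) : ZMod v) := by
      rw [Nat.cast_sub (by omega)]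
    have e6 : (j : ZMod v) - ((5*m+2 : ℕ) : ZMod v) = ((3*m+3+j : ℕ) : ZMod v) := by
      push_cast; linear_combination -h0
    rw [e3, e4, e5, e6]; simp

lemma block2_cast (v m : ℕ) (h0 : ((8*m+5 : ℕ) : ZMod v) = 0) :
    (({((3*m+1 : ℕ) : ZMod v) - ((m : ℕ) : ZMod v),
       ((m : ℕ) : ZMod v) - ((3*m+1 : ℕ) : ZMod v)} : Multiset (ZMod v)) +
      (Multiset.range m).bind (fun j =>
        ({((m : ℕ) : ZMod v) - (j : ZMod v), (j : ZMod v) - ((m : ℕ) : ZMod v),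
          ((3*m+1 : ℕ) : ZMod v) - (j : ZMod v), (j : ZMod v) - ((3*m+1 : ℕ) : ZMod v)} :
          Multiset (ZMod v))))
    = (natBlock2 m).map (fun n : ℕ => (n : ZMod v)) := by
  push_cast at h0
  rw [natBlock2, Multiset.map_add, Multiset.map_bind]
  congr 1
  · have e1 : ((3*m+1 : ℕ) : ZMod v) - ((m : ℕ) : ZMod v) = ((2*m+1 : ℕ) : ZMod v) := by
      push_cast; ring
    have e2 : ((m : ℕ) : ZMod v) - ((3*m+1 : ℕ) : ZMod v) = ((6*m+4 : ℕ) : ZMod v) := by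
      push_cast; linear_combination -h0
    rw [e1, e2]; simp
  · refine Multiset.bind_congr ?_
    intro j hj
    rw [Multiset.mem_range] at hj
    have e3 : ((m : ℕ) : ZMod v) - (j : ZMod v) = ((m - j : ℕ) : ZMod v) := by
      rw [Nat.cast_sub (by omega)]
    have e4 : (j : ZMod v) - ((m : ℕ) : ZMod v) = ((7*m+5+j : ℕ) : ZMod v) := by
      push_cast; linear_combination -h0
    have e5 : ((3*m+1 : ℕ) : ZMod v) - (j : ZMod v) = ((3*m+1 - j : ℕ) : ZMod v) := by
      rw [Nat.cast_sub (by omega)]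
    have e6 : (j : ZMod v) - ((3*m+1 : ℕ) : ZMod v) = ((5*m+4+j : ℕ) : ZMod v) := by
      push_cast; linear_combination -h0
    rw [e3, e4, e5, e6]; simp

/-- The multiset of signed differences contributed by a base block
`{0,1,...,k-3, x, y}` in `ℤ/v`: `±(y - x)` together with `±(x - j)` and `±(y - j)`
for `j ∈ {0,...,k-3}`. -/
def blockDiffs (v k x y : ℕ) : Multiset (ZMod v) :=
  ({(y : ZMod v) - (x : ZMod v), (x : ZMod v) - (y : ZMod v)} : Multiset (ZMod v)) +
  (Finset.range (k - 2)).val.bind (fun j =>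
    ({(x : ZMod v) - (j : ZMod v), (j : ZMod v) - (x : ZMod v),
      (y : ZMod v) - (j : ZMod v), (j : ZMod v) - (y : ZMod v)} : Multiset (ZMod v)))

/-- `c = 2` case: for `k ≥ 3` and `v = 8k - 11`, the signed differences of the two base
blocks `{0,…,k-3} ∪ {2(k-2), 5(k-2)+2}` and `{0,…,k-3} ∪ {(k-2), 3(k-2)+1}` cover every
nonzero residue of `ℤ/(8k-11)` exactly once. -/
theorem two_base_blocks_cover_all_differences (k : ℕ) (hk : 3 ≤ k) :
    ∀ g : ZMod (8 * k - 11), g ≠ 0 →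
      (blockDiffs (8 * k - 11) k (2 * (k - 2)) (5 * (k - 2) + 2) +
       blockDiffs (8 * k - 11) k (k - 2) (3 * (k - 2) + 1)).count g = 1 := by
  intro g hg
  simp only [blockDiffs, Finset.range_val]
  set m := k - 2 with hmdef
  have hm : 1 ≤ m := by omega
  have hv : 8*k - 11 = 8*m + 5 := by omega
  haveI : NeZero (8*k - 11) := ⟨by omega⟩
  have h0 : ((8*m+5 : ℕ) : ZMod (8*k - 11)) = 0 := by
    rw [← hv]; exact ZMod.natCast_self _
  rw [block1_cast _ m h0, block2_cast _ m h0, ← Multiset.map_add, natBlocks_eq m]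
  have hval : g.val < 8*k - 11 := ZMod.val_lt g
  have hne : g.val ≠ 0 := by
    intro h; exact hg ((ZMod.val_eq_zero g).mp h)
  rw [shiftMap, Multiset.map_map, Multiset.count_map]
  have key : ∀ i ∈ Multiset.range (8*m+4),
      (g = ((fun n : ℕ => (n : ZMod (8*k-11))) ∘ (fun j => 1 + j)) i) ↔ i = g.val - 1 := by
    intro i hi
    rw [Multiset.mem_range] at hi
    simp only [Function.comp_apply]
    constructor
    · intro h
      have hv2 := congrArg ZMod.val h
      rw [ZMod.val_cast_of_lt (by omega)] at hv2
      omega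
    · intro h
      subst h
      have h1 : 1 + (g.val - 1) = g.val := by omega
      rw [h1]
      exact (ZMod.natCast_rightInverse g).symm
  rw [Multiset.filter_congr key, Multiset.filter_eq', Multiset.card_replicate]
  exact Multiset.count_eq_one_of_mem (Multiset.nodup_range _)
    (Multiset.mem_range.mpr (by omega))
end

section
/- Suppose a DCCD(v,k,b) with t = 2 admits an expansion set of size l = v/(k-2), where v is an odd multiple of k-2. Then inserting, at each expansion location i_j, the (l+1)/2 blocks U_{i_j} ∪ e for e ranging over the edges of the j-th 1-factor of a 1-factorization {F_1,...,F_l} of K_{l+1} on a new point set X, yields a DCCD(v*, k, b*) with v* = v + v/(k-2) + 1 and b* = b + (v/(k-2))·((v+k-2)/(2k-4)). If the original design is tight (every pair covered exactly once), circular, or economical, so is the new one. -/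
/-- A (linear) double change covering design `DCCD(v,k,b)` with strength `t = 2`. -/
structure DCCD (v k b : ℕ) where
  B : ℕ → Finset (Fin v)
  hb : 1 ≤ b
  card_block : ∀ i < b, (B i).card = k
  double_change : ∀ i, i + 1 < b → (B i ∩ B (i + 1)).card = k - 2
  cover : ∀ T : Finset (Fin v), T.card = 2 → ∃ i < b, T ⊆ B i

/-- A `DCCD` is circular when the first and last blocks also differ in exactly two
elements. -/
def DCCD.IsCircular {v k b : ℕ} (D : DCCD v k b) : Prop :=
  (D.B (b - 1) ∩ D.B 0).card = k - 2

/-- A pair `T` is covered at block `i` when `T ⊆ Bᵢ` and some element of `T` is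
introduced at `i` (i.e. `i = 0` or that element is absent from the previous block). -/
def DCCD.CoveredAt {v k b : ℕ} (D : DCCD v k b) (T : Finset (Fin v)) (i : ℕ) : Prop :=
  i < b ∧ T ⊆ D.B i ∧ ∃ x ∈ T, i = 0 ∨ x ∉ D.B (i - 1)

/-- Tight: every pair is covered exactly once. -/
def DCCD.IsTight {v k b : ℕ} (D : DCCD v k b) : Prop :=
  ∀ T : Finset (Fin v), T.card = 2 → ∃! i, D.CoveredAt T i

/-- Economical: the number of blocks meets the lower bound
`⌈(C(v,2) - C(k,2))/(2k-3)⌉ + 1`. -/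
def DCCD.IsEconomical {v k b : ℕ} (_ : DCCD v k b) : Prop :=
  b = (Nat.choose v 2 - Nat.choose k 2 + (2 * k - 3) - 1) / (2 * k - 3) + 1

open Finset

/-!
After the old block `B_{i_j}` of the expansion set insert the `(l + 1) / 2` blocks `U_{i_j} ∪ e`,
`e` running over the edges of the `j`-th factor of the patterned 1-factorization of `K_{l+1}` on
`ZMod l ∪ {∞}`. Consecutive blocks still meet in `k - 2` points because the edges of a factor are
disjoint. The old points of an inserted block already lie in the block before it, so an old pair
is newly covered exactly where it was before. A pair of an old point `x` and a new point `y` lies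
only in the run after the unique `U_{i_j}` containing `x`, at the unique edge of factor `j` through
`y`, and a pair of new points only at its unique edge; so covering and tightness carry over. Circularity survives as
nothing is inserted after the last block, and economy because
`C(v + l + 1, 2) - C(v, 2) = (2k - 3) · l (l + 1) / 2` when `v = l (k - 2)`.
-/

section Runs

variable (g : ℕ → ℕ)

def runStart (i : ℕ) : ℕ := ∑ i' ∈ range i, (g i' + 1)

/-- When `g i` blocks are inserted after each old block `i`, position `p` of the new sequence is
the `s`-th place after the old block `i`, where `slot g p = (i, s)`; old block `i` itself sits at
position `runStart g i`. -/
def slot : ℕ → ℕ × ℕ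
  | 0 => (0, 0)
  | p + 1 =>
    if (slot p).2 < g (slot p).1 then ((slot p).1, (slot p).2 + 1) else ((slot p).1 + 1, 0)

variable {g}

theorem runStart_succ (i : ℕ) : runStart g (i + 1) = runStart g i + g i + 1 := by
  rw [runStart, sum_range_succ, ← add_assoc]; rfl

theorem runStart_strictMono : StrictMono (runStart g) :=
  strictMono_nat_of_lt_succ fun i => by rw [runStart_succ]; omega

theorem slot_runStart_add_of_slot_runStart {i : ℕ} (h : slot g (runStart g i) = (i, 0)) :
    ∀ {s}, s ≤ g i → slot g (runStart g i + s) = (i, s)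
  | 0, _ => h
  | s + 1, hs => by
    rw [← add_assoc, slot, slot_runStart_add_of_slot_runStart h (by omega)]
    exact if_pos hs

theorem slot_runStart (i : ℕ) : slot g (runStart g i) = (i, 0) := by
  induction i with
  | zero => rfl
  | succ i ih =>
    rw [runStart_succ, slot, slot_runStart_add_of_slot_runStart ih le_rfl, if_neg (lt_irrefl _)]

theorem slot_runStart_add {i s : ℕ} (hs : s ≤ g i) : slot g (runStart g i + s) = (i, s) :=
  slot_runStart_add_of_slot_runStart (slot_runStart i) hs

theorem exists_runStart_add_eq (p : ℕ) : ∃ i s, s ≤ g i ∧ runStart g i + s = p := by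
  induction p with
  | zero => exact ⟨0, 0, Nat.zero_le _, rfl⟩
  | succ p ih =>
    obtain ⟨i, s, hs, rfl⟩ := ih
    rcases hs.lt_or_eq with hs | rfl
    · exact ⟨i, s + 1, hs, by omega⟩
    · exact ⟨i + 1, 0, Nat.zero_le _, by rw [runStart_succ]⟩

theorem runStart_add_lt_runStart_iff {i s : ℕ} (hs : s ≤ g i) (b : ℕ) :
    runStart g i + s < runStart g b ↔ i < b := by
  constructor
  · intro h
    by_contra! hbi
    have := (runStart_strictMono (g := g)).monotone hbi
    omega
  · intro h
    have := (runStart_strictMono (g := g)).monotone (Nat.succ_le_of_lt h)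
    rw [runStart_succ] at this
    omega

end Runs

/-- The factors `F j` form a 1-factorization of the complete graph on `X`, the edges of the
factor `F j` being listed as `F j r`, `r < m`. -/
structure IsOneFactorization {ι X : Type*} (F : ι → ℕ → Finset X) (m : ℕ) : Prop where
  card_eq_two : ∀ j, ∀ r < m, (F j r).card = 2
  existsUnique_mem : ∀ j x, ∃! r, r < m ∧ x ∈ F j r
  existsUnique_pair : ∀ x y, x ≠ y →
    ∃! jr : ι × ℕ, jr.2 < m ∧ x ∈ F jr.1 jr.2 ∧ y ∈ F jr.1 jr.2

namespace IsOneFactorization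

variable {ι ι' X : Type*} {F : ι → ℕ → Finset X} {m : ℕ}

theorem comp_equiv (hF : IsOneFactorization F m) (e : ι' ≃ ι) :
    IsOneFactorization (fun j => F (e j)) m where
  card_eq_two j := hF.card_eq_two (e j)
  existsUnique_mem j := hF.existsUnique_mem (e j)
  existsUnique_pair x y hxy := by
    obtain ⟨⟨j, r⟩, hjr, huniq⟩ := hF.existsUnique_pair x y hxy
    refine ⟨(e.symm j, r), by simpa using hjr, fun ⟨j', r'⟩ h => ?_⟩
    cases huniq (e j', r') h
    simp

theorem disjoint (hF : IsOneFactorization F m) {j : ι} {r r' : ℕ} (hr : r < m) (hr' : r' < m)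
    (hne : r ≠ r') : Disjoint (F j r) (F j r') :=
  disjoint_left.2 fun x hx hx' =>
    hne ((hF.existsUnique_mem j x).unique ⟨hr, hx⟩ ⟨hr', hx'⟩)

end IsOneFactorization

section Patterned

variable {l : ℕ}

/-- The patterned 1-factorization of `K_{l+1}` on `ZMod l ∪ {∞}`: the factor `j` consists of
`{∞, j}` and the edges `{j + r, j - r}`. -/
def patternedEdge (l : ℕ) (j : ZMod l) (r : ℕ) : Finset (Option (ZMod l)) :=
  if r = 0 then {none, some j} else {some (j + r), some (j - r)}

theorem none_mem_patternedEdge {j : ZMod l} {r : ℕ} : none ∈ patternedEdge l j r ↔ r = 0 := by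
  unfold patternedEdge; split_ifs <;> simp [*]

theorem some_mem_patternedEdge {j a : ZMod l} {r : ℕ} :
    some a ∈ patternedEdge l j r ↔ a - j = r ∨ a - j = -r := by
  unfold patternedEdge
  split_ifs with hr
  · simp [hr, sub_eq_zero]
  · simp only [mem_insert, mem_singleton, Option.some.injEq]
    constructor <;> rintro (h | h) <;> [left; right; left; right] <;> linear_combination h

theorem ZMod.add_eq_zero_of_natCast_eq_neg {r r' : ℕ} (h : (r : ZMod l) = -r')
    (hlt : r + r' < l) : r + r' = 0 := by
  have : ((r + r' : ℕ) : ZMod l) = 0 := by push_cast; rw [h, neg_add_cancel]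
  rw [ZMod.natCast_eq_zero_iff] at this
  exact Nat.eq_zero_of_dvd_of_lt this hlt

theorem ZMod.existsUnique_eq_natCast_or_neg (hl : Odd l) (d : ZMod l) :
    ∃! r, r < (l + 1) / 2 ∧ (d = r ∨ d = -r) := by
  have : NeZero l := ⟨hl.pos.ne'⟩
  obtain ⟨t, rfl⟩ := hl
  have hm : (2 * t + 1 + 1) / 2 = t + 1 := by omega
  rw [hm]
  have natCast_inj {r r' : ℕ} (hr : r < t + 1) (hr' : r' < t + 1)
      (h : (r : ZMod (2 * t + 1)) = r') : r = r' := by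
    rw [ZMod.natCast_eq_natCast_iff'] at h
    rwa [Nat.mod_eq_of_lt (by omega), Nat.mod_eq_of_lt (by omega)] at h
  refine existsUnique_of_exists_of_unique ?_ ?_
  · by_cases h : d.val < t + 1
    · exact ⟨d.val, h, Or.inl (ZMod.natCast_zmod_val d).symm⟩
    · have hval := ZMod.val_lt d
      refine ⟨2 * t + 1 - d.val, by omega, Or.inr ?_⟩
      rw [Nat.cast_sub hval.le, ZMod.natCast_self, ZMod.natCast_zmod_val]
      ring
  · rintro r r' ⟨hr, hd | hd⟩ ⟨hr', hd' | hd'⟩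
    · exact natCast_inj hr hr' (hd.symm.trans hd')
    · have := ZMod.add_eq_zero_of_natCast_eq_neg (hd.symm.trans hd') (by omega); omega
    · have := ZMod.add_eq_zero_of_natCast_eq_neg (hd'.symm.trans hd) (by omega); omega
    · exact natCast_inj hr hr' (neg_inj.1 (hd.symm.trans hd'))

theorem some_mem_patternedEdge_and_some_mem {j a b : ZMod l} {r : ℕ} (hab : a ≠ b) :
    some a ∈ patternedEdge l j r ∧ some b ∈ patternedEdge l j r ↔
      2 * j = a + b ∧ (a - j = r ∨ a - j = -r) := by
  simp only [some_mem_patternedEdge]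
  constructor
  · rintro ⟨ha | ha, hb | hb⟩
    · exact absurd (by linear_combination ha - hb) hab
    · exact ⟨by linear_combination -ha - hb, Or.inl ha⟩
    · exact ⟨by linear_combination -ha - hb, Or.inr ha⟩
    · exact absurd (by linear_combination ha - hb) hab
  · rintro ⟨hj, ha | ha⟩
    · exact ⟨Or.inl ha, Or.inr (by linear_combination -hj - ha)⟩
    · exact ⟨Or.inr ha, Or.inl (by linear_combination -hj - ha)⟩

theorem isOneFactorization_patternedEdge (hl : Odd l) :
    IsOneFactorization (patternedEdge l) ((l + 1) / 2) where
  card_eq_two j r hr := by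
    unfold patternedEdge
    split_ifs with h0
    · exact card_pair (by simp)
    refine card_pair fun h => h0 ?_
    have hjr := Option.some.inj h
    have := ZMod.add_eq_zero_of_natCast_eq_neg (r := r) (r' := r) (by linear_combination hjr)
      (by obtain ⟨t, rfl⟩ := hl; omega)
    omega
  existsUnique_mem j
    | none => ⟨0, ⟨Nat.div_pos (Nat.succ_le_succ hl.pos) two_pos,
        none_mem_patternedEdge.2 rfl⟩, fun r hr => none_mem_patternedEdge.1 hr.2⟩
    | some a => by
      simpa only [some_mem_patternedEdge] using ZMod.existsUnique_eq_natCast_or_neg hl (a - j)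
  existsUnique_pair := by
    have hinf (a : ZMod l) : ∃! jr : ZMod l × ℕ, jr.2 < (l + 1) / 2 ∧
        none ∈ patternedEdge l jr.1 jr.2 ∧ some a ∈ patternedEdge l jr.1 jr.2 := by
      refine ⟨(a, 0), ⟨Nat.div_pos (Nat.succ_le_succ hl.pos) two_pos,
        by simp [none_mem_patternedEdge, some_mem_patternedEdge]⟩, ?_⟩
      rintro ⟨j, r⟩ ⟨-, hnone, ha⟩
      rw [none_mem_patternedEdge] at hnone
      subst hnone
      obtain rfl : a = j := by simpa [some_mem_patternedEdge, sub_eq_zero] using ha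
      rfl
    have h2 : IsUnit (2 : ZMod l) := by
      exact_mod_cast (ZMod.isUnit_iff_coprime 2 l).2 (Nat.coprime_two_left.2 hl)
    rintro (_ | a) (_ | b) hab
    · exact absurd rfl hab
    · exact hinf b
    · exact (existsUnique_congr fun _ => by rw [and_comm (a := some a ∈ _)]).1 (hinf a)
    have hab : a ≠ b := by simpa using hab
    set j₀ := ↑h2.unit⁻¹ * (a + b)
    have hj₀ : 2 * j₀ = a + b := by simp [j₀, ← mul_assoc]
    obtain ⟨r, hr, hru⟩ := ZMod.existsUnique_eq_natCast_or_neg hl (a - j₀)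
    refine ⟨(j₀, r), ⟨hr.1, (some_mem_patternedEdge_and_some_mem hab).2 ⟨hj₀, hr.2⟩⟩,
      ?_⟩
    rintro ⟨j, r'⟩ ⟨hr', hmem⟩
    obtain ⟨hj, hd⟩ := (some_mem_patternedEdge_and_some_mem hab).1 hmem
    obtain rfl : j = j₀ := h2.mul_left_cancel (hj.trans hj₀.symm)
    rw [hru r' ⟨hr', hd⟩]

end Patterned

theorem Finset.disjSum_inter_disjSum {α β : Type*} [DecidableEq α] [DecidableEq β]
    (s s' : Finset α) (t t' : Finset β) :
    s.disjSum t ∩ s'.disjSum t' = (s ∩ s').disjSum (t ∩ t') := by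
  ext (x | y) <;> simp

section PairIntroducedAt

variable {β γ : Type*}

def PairIntroducedAt (S : ℕ → Finset β) (z z' : β) (p : ℕ) : Prop :=
  z ∈ S p ∧ z' ∈ S p ∧ (p = 0 ∨ z ∉ S (p - 1) ∨ z' ∉ S (p - 1))

variable {S : ℕ → Finset β} {z z' : β}

theorem pairIntroducedAt_comm {p : ℕ} :
    PairIntroducedAt S z z' p ↔ PairIntroducedAt S z' z p := by
  unfold PairIntroducedAt; tauto

theorem pairIntroducedAt_map_equiv (e : β ≃ γ) (y y' : γ) (p : ℕ) :
    PairIntroducedAt (fun p => (S p).map e.toEmbedding) y y' p ↔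
      PairIntroducedAt S (e.symm y) (e.symm y') p := by
  simp only [PairIntroducedAt, mem_map_equiv]

theorem existsUnique_pairIntroducedAt {N : ℕ} (h : ∃! p, p < N ∧ z ∈ S p ∧ z' ∈ S p) :
    ∃! p, p < N ∧ PairIntroducedAt S z z' p := by
  obtain ⟨p, ⟨hp, hz, hz'⟩, huniq⟩ := h
  refine ⟨p, ⟨hp, hz, hz', ?_⟩, fun q ⟨hq, hzq, hzq', _⟩ => huniq q ⟨hq, hzq, hzq'⟩⟩
  by_contra! hold
  have := huniq (p - 1) ⟨by omega, hold.2.1, hold.2.2⟩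
  omega

end PairIntroducedAt

theorem DCCD.coveredAt_pair_iff {v k b : ℕ} (D : DCCD v k b) (x y : Fin v) (p : ℕ) :
    D.CoveredAt {x, y} p ↔ p < b ∧ PairIntroducedAt D.B x y p := by
  simp only [DCCD.CoveredAt, PairIntroducedAt, insert_subset_iff, singleton_subset_iff,
    mem_insert, mem_singleton, exists_eq_or_imp, exists_eq_left]
  tauto

theorem DCCD.isTight_iff {v k b : ℕ} (D : DCCD v k b) :
    D.IsTight ↔ ∀ x y, x ≠ y → ∃! p, p < b ∧ PairIntroducedAt D.B x y p := by
  refine ⟨fun hT x y hxy => ?_, fun h T hT => ?_⟩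
  · simpa only [D.coveredAt_pair_iff] using hT {x, y} (card_pair hxy)
  · obtain ⟨x, y, hxy, rfl⟩ := card_eq_two.1 hT
    simpa only [D.coveredAt_pair_iff] using h x y hxy

section Expansion

variable {v k b : ℕ} (D : DCCD v k b) {ι X : Type*} [Fintype ι]
  (idx : ι → ℕ) (F : ι → ℕ → Finset X) (m : ℕ)

def DCCD.unchanged (i : ℕ) : Finset (Fin v) := D.B i ∩ D.B (i + 1)

theorem DCCD.unchanged_subset_left (i : ℕ) : D.unchanged i ⊆ D.B i := inter_subset_left

theorem DCCD.unchanged_subset_right (i : ℕ) : D.unchanged i ⊆ D.B (i + 1) := inter_subset_right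

theorem DCCD.card_unchanged {i : ℕ} (h : i + 1 < b) : (D.unchanged i).card = k - 2 :=
  D.double_change i h

def insertions (i : ℕ) : ℕ := if i ∈ univ.image idx then m else 0

/-- Slot `(i, 0)` holds the old block `Bᵢ`, slot `(i, r + 1)` the `r`-th block `Uᵢ ∪ F j r`
inserted after it when `i = idx j`. -/
noncomputable def DCCD.expandSlot : ℕ × ℕ → Finset (Fin v ⊕ X)
  | (i, 0) => (D.B i).disjSum ∅
  | (i, r + 1) => (D.unchanged i).disjSum ((Function.partialInv idx i).elim ∅ (F · r))

noncomputable def DCCD.expand (p : ℕ) : Finset (Fin v ⊕ X) :=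
  D.expandSlot idx F (slot (insertions idx m) p)

variable {D idx F m}

theorem insertions_idx (j : ι) : insertions idx m (idx j) = m := by simp [insertions]

theorem exists_idx_of_insertions_ne_zero {i : ℕ} (h : insertions idx m i ≠ 0) :
    ∃ j, idx j = i := by
  unfold insertions at h
  split_ifs at h with hi
  · simpa using hi
  · exact absurd rfl h

theorem insertions_eq_zero {i : ℕ} (h : ∀ j, idx j ≠ i) : insertions idx m i = 0 :=
  if_neg (by simpa using h)

theorem runStart_insertions (hinj : Function.Injective idx) (hlt : ∀ j, idx j < b) :
    runStart (insertions idx m) b = b + Fintype.card ι * m := by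
  have himage : range b ∩ univ.image idx = univ.image idx :=
    inter_eq_right.2 fun i hi => by
      obtain ⟨j, -, rfl⟩ := mem_image.1 hi
      exact mem_range.2 (hlt j)
  simp only [runStart, sum_add_distrib, insertions, sum_ite_mem, himage, sum_const,
    card_image_of_injective _ hinj, card_univ, card_range, smul_eq_mul]
  ring

theorem eq_runStart_or_eq_runStart_idx_add (p : ℕ) :
    (∃ i, runStart (insertions idx m) i = p) ∨
      ∃ j r, r < m ∧ runStart (insertions idx m) (idx j) + (r + 1) = p := by
  obtain ⟨i, s, hs, rfl⟩ := exists_runStart_add_eq (g := insertions idx m) p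
  rcases s with _ | r
  · exact Or.inl ⟨i, rfl⟩
  · obtain ⟨j, rfl⟩ :=
      exists_idx_of_insertions_ne_zero (idx := idx) (m := m) (i := i) (by omega)
    rw [insertions_idx] at hs
    exact Or.inr ⟨j, r, hs, rfl⟩

theorem expand_runStart (i : ℕ) :
    D.expand idx F m (runStart (insertions idx m) i) = (D.B i).disjSum ∅ := by
  rw [DCCD.expand, slot_runStart, DCCD.expandSlot]

theorem expand_runStart_idx_add (hinj : Function.Injective idx) {j : ι} {r : ℕ} (hr : r < m) :
    D.expand idx F m (runStart (insertions idx m) (idx j) + (r + 1)) =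
      (D.unchanged (idx j)).disjSum (F j r) := by
  rw [DCCD.expand, slot_runStart_add (by rw [insertions_idx]; omega), DCCD.expandSlot,
    Function.partialInv_left hinj]
  rfl

theorem card_expand (hk : 2 ≤ k) (hF : IsOneFactorization F m) (hinj : Function.Injective idx)
    (hlt : ∀ j, idx j + 1 < b) {p : ℕ} (hp : p < runStart (insertions idx m) b) :
    (D.expand idx F m p).card = k := by
  obtain ⟨i, rfl⟩ | ⟨j, r, hr, rfl⟩ :=
    eq_runStart_or_eq_runStart_idx_add (idx := idx) (m := m) p
  · rw [expand_runStart, card_disjSum, card_empty, add_zero]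
    exact D.card_block i (runStart_strictMono.lt_iff_lt.1 hp)
  · rw [expand_runStart_idx_add hinj hr, card_disjSum, D.card_unchanged (hlt j),
      hF.card_eq_two j r hr]
    omega

theorem card_expand_inter_succ [DecidableEq X] (hF : IsOneFactorization F m)
    (hinj : Function.Injective idx) (hlt : ∀ j, idx j + 1 < b) {p : ℕ}
    (hp : p + 1 < runStart (insertions idx m) b) :
    (D.expand idx F m p ∩ D.expand idx F m (p + 1)).card = k - 2 := by
  obtain ⟨i, rfl⟩ | ⟨j, r, hr, rfl⟩ :=
    eq_runStart_or_eq_runStart_idx_add (idx := idx) (m := m) p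
  · by_cases hi : insertions idx m i = 0
    · have hsucc : runStart (insertions idx m) i + 1 = runStart (insertions idx m) (i + 1) := by
        rw [runStart_succ, hi]
      rw [hsucc] at hp ⊢
      rw [expand_runStart, expand_runStart, disjSum_inter_disjSum, card_disjSum, inter_empty,
        card_empty, add_zero]
      exact D.double_change i (runStart_strictMono.lt_iff_lt.1 hp)
    · obtain ⟨j, rfl⟩ := exists_idx_of_insertions_ne_zero hi
      rw [insertions_idx] at hi
      rw [expand_runStart, expand_runStart_idx_add (r := 0) hinj (by omega),
        disjSum_inter_disjSum, card_disjSum, empty_inter, card_empty, add_zero,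
        inter_eq_right.2 (D.unchanged_subset_left _), D.card_unchanged (hlt j)]
  · rcases (Nat.succ_le_of_lt hr).lt_or_eq with hr' | hr'
    · rw [add_assoc, expand_runStart_idx_add hinj hr, expand_runStart_idx_add hinj hr',
        disjSum_inter_disjSum, card_disjSum, inter_self,
        disjoint_iff_inter_eq_empty.1 (hF.disjoint hr hr' (by omega)), card_empty, add_zero,
        D.card_unchanged (hlt j)]
    · have hsucc : runStart (insertions idx m) (idx j) + (r + 1) + 1 =
          runStart (insertions idx m) (idx j + 1) := by
        rw [runStart_succ, insertions_idx, ← hr']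
      rw [hsucc, expand_runStart_idx_add hinj hr, expand_runStart, disjSum_inter_disjSum,
        card_disjSum, inter_empty, card_empty, add_zero,
        inter_eq_left.2 (D.unchanged_subset_right _), D.card_unchanged (hlt j)]

theorem runStart_idx_add_lt (hlt : ∀ j, idx j + 1 < b) {j : ι} {r : ℕ} (hr : r < m) :
    runStart (insertions idx m) (idx j) + (r + 1) < runStart (insertions idx m) b :=
  (runStart_add_lt_runStart_iff (by rw [insertions_idx]; omega) b).2 (by have := hlt j; omega)

theorem runStart_ne_runStart_idx_add {i : ℕ} {j : ι} {r : ℕ} (hr : r < m) :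
    runStart (insertions idx m) i ≠ runStart (insertions idx m) (idx j) + (r + 1) := fun h => by
  have := congrArg (slot (insertions idx m)) h
  rw [slot_runStart, slot_runStart_add (by rw [insertions_idx]; omega)] at this
  simp at this

theorem exists_of_inr_mem_expand {o : X} {p : ℕ} (h : .inr o ∈ D.expand idx F m p) :
    ∃ j r, r < m ∧ runStart (insertions idx m) (idx j) + (r + 1) = p := by
  obtain ⟨i, rfl⟩ | hrun := eq_runStart_or_eq_runStart_idx_add (idx := idx) (m := m) p
  · simp [expand_runStart] at h
  · exact hrun

theorem inl_mem_expand_runStart_sub_one (hinj : Function.Injective idx) {i : ℕ} (hi : i ≠ 0)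
    {x : Fin v} (hx : x ∈ D.B i) :
    .inl x ∈ D.expand idx F m (runStart (insertions idx m) i - 1) ↔ x ∈ D.B (i - 1) := by
  obtain ⟨i, rfl⟩ := Nat.exists_eq_succ_of_ne_zero hi
  rw [runStart_succ, Nat.add_sub_cancel, Nat.succ_sub_one]
  by_cases hg : insertions idx m i = 0
  · rw [hg, add_zero, expand_runStart, inl_mem_disjSum]
  · obtain ⟨j, rfl⟩ := exists_idx_of_insertions_ne_zero hg
    rw [insertions_idx] at hg ⊢
    obtain ⟨r, rfl⟩ := Nat.exists_eq_succ_of_ne_zero hg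
    rw [expand_runStart_idx_add hinj (Nat.lt_succ_self r), inl_mem_disjSum, DCCD.unchanged,
      mem_inter, and_iff_left hx]

theorem pairIntroducedAt_expand_inl_iff (hinj : Function.Injective idx) {x y : Fin v} {p : ℕ} :
    PairIntroducedAt (D.expand idx F m) (.inl x) (.inl y) p ↔
      ∃ i, runStart (insertions idx m) i = p ∧ PairIntroducedAt D.B x y i := by
  obtain ⟨i, rfl⟩ | ⟨j, r, hr, rfl⟩ :=
    eq_runStart_or_eq_runStart_idx_add (idx := idx) (m := m) p
  · simp only [runStart_strictMono.injective.eq_iff, exists_eq_left, PairIntroducedAt,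
      expand_runStart, inl_mem_disjSum]
    refine and_congr_right fun hx => and_congr_right fun hy => ?_
    rcases eq_or_ne i 0 with rfl | hi
    · simp [runStart]
    · have hpos : runStart (insertions idx m) i ≠ 0 :=
        (runStart_strictMono (Nat.pos_of_ne_zero hi)).ne'
      rw [inl_mem_expand_runStart_sub_one hinj hi hx, inl_mem_expand_runStart_sub_one hinj hi hy]
      simp [hi, hpos]
  · have hold {z : Fin v}
        (hz : .inl z ∈ D.expand idx F m (runStart (insertions idx m) (idx j) + (r + 1))) :
        .inl z ∈ D.expand idx F m (runStart (insertions idx m) (idx j) + (r + 1) - 1) := by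
      rw [expand_runStart_idx_add hinj hr, inl_mem_disjSum] at hz
      rcases r with _ | r
      · rw [Nat.add_sub_cancel, expand_runStart, inl_mem_disjSum]
        exact D.unchanged_subset_left _ hz
      · rw [Nat.add_succ_sub_one, expand_runStart_idx_add hinj (by omega), inl_mem_disjSum]
        exact hz
    refine iff_of_false (fun ⟨hx, hy, hnew⟩ => ?_)
      fun ⟨i, hi, _⟩ => runStart_ne_runStart_idx_add hr hi
    rcases hnew with h | h | h
    · omega
    · exact h (hold hx)
    · exact h (hold hy)

theorem existsUnique_mem_expand_inl_inr (hF : IsOneFactorization F m)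
    (hinj : Function.Injective idx) (hlt : ∀ j, idx j + 1 < b)
    (hpart : ∀ x, ∃! j, x ∈ D.unchanged (idx j)) (x : Fin v) (o : X) :
    ∃! p, p < runStart (insertions idx m) b ∧
      .inl x ∈ D.expand idx F m p ∧ .inr o ∈ D.expand idx F m p := by
  obtain ⟨j, hxj, hj⟩ := hpart x
  obtain ⟨r, ⟨hr, hor⟩, hru⟩ := hF.existsUnique_mem j o
  refine ⟨runStart (insertions idx m) (idx j) + (r + 1), ⟨runStart_idx_add_lt hlt hr, ?_⟩,
    ?_⟩
  · rw [expand_runStart_idx_add hinj hr, inl_mem_disjSum, inr_mem_disjSum]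
    exact ⟨hxj, hor⟩
  · rintro q ⟨-, hxq, hoq⟩
    obtain ⟨j', r', hr', rfl⟩ := exists_of_inr_mem_expand hoq
    rw [expand_runStart_idx_add hinj hr', inl_mem_disjSum] at hxq
    rw [expand_runStart_idx_add hinj hr', inr_mem_disjSum] at hoq
    obtain rfl := hj j' hxq
    obtain rfl := hru r' ⟨hr', hoq⟩
    rfl

theorem existsUnique_mem_expand_inr_inr (hF : IsOneFactorization F m)
    (hinj : Function.Injective idx) (hlt : ∀ j, idx j + 1 < b) {o o' : X} (h : o ≠ o') :
    ∃! p, p < runStart (insertions idx m) b ∧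
      .inr o ∈ D.expand idx F m p ∧ .inr o' ∈ D.expand idx F m p := by
  obtain ⟨⟨j, r⟩, ⟨hr, ho, ho'⟩, hu⟩ := hF.existsUnique_pair o o' h
  refine ⟨runStart (insertions idx m) (idx j) + (r + 1), ⟨runStart_idx_add_lt hlt hr, ?_⟩,
    ?_⟩
  · rw [expand_runStart_idx_add hinj hr, inr_mem_disjSum, inr_mem_disjSum]
    exact ⟨ho, ho'⟩
  · rintro q ⟨-, hoq, ho'q⟩
    obtain ⟨j', r', hr', rfl⟩ := exists_of_inr_mem_expand hoq
    rw [expand_runStart_idx_add hinj hr', inr_mem_disjSum] at hoq ho'q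
    cases hu (j', r') ⟨hr', hoq, ho'q⟩
    rfl

theorem exists_mem_expand_pair (hF : IsOneFactorization F m) (hinj : Function.Injective idx)
    (hlt : ∀ j, idx j + 1 < b) (hpart : ∀ x, ∃! j, x ∈ D.unchanged (idx j))
    {z z' : Fin v ⊕ X} (h : z ≠ z') :
    ∃ p < runStart (insertions idx m) b,
      z ∈ D.expand idx F m p ∧ z' ∈ D.expand idx F m p := by
  rcases z with x | o <;> rcases z' with y | o'
  · obtain ⟨i, hi, hxy⟩ := D.cover {x, y} (card_pair (by simpa using h))
    refine ⟨runStart (insertions idx m) i, runStart_strictMono.lt_iff_lt.2 hi, ?_⟩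
    simpa only [expand_runStart, inl_mem_disjSum, insert_subset_iff, singleton_subset_iff]
      using hxy
  · exact (existsUnique_mem_expand_inl_inr hF hinj hlt hpart x o').exists
  · obtain ⟨p, hp, hy, ho⟩ := (existsUnique_mem_expand_inl_inr hF hinj hlt hpart y o).exists
    exact ⟨p, hp, ho, hy⟩
  · exact (existsUnique_mem_expand_inr_inr hF hinj hlt (by simpa using h)).exists

theorem existsUnique_pairIntroducedAt_expand (hT : D.IsTight) (hF : IsOneFactorization F m)
    (hinj : Function.Injective idx) (hlt : ∀ j, idx j + 1 < b)
    (hpart : ∀ x, ∃! j, x ∈ D.unchanged (idx j)) {z z' : Fin v ⊕ X} (h : z ≠ z') :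
    ∃! p, p < runStart (insertions idx m) b ∧ PairIntroducedAt (D.expand idx F m) z z' p := by
  rcases z with x | o <;> rcases z' with y | o'
  · obtain ⟨i, ⟨hi, hxy⟩, hiu⟩ := D.isTight_iff.1 hT x y (by simpa using h)
    refine ⟨runStart (insertions idx m) i, ⟨runStart_strictMono.lt_iff_lt.2 hi,
      (pairIntroducedAt_expand_inl_iff hinj).2 ⟨i, rfl, hxy⟩⟩, ?_⟩
    rintro q ⟨hq, hxyq⟩
    obtain ⟨i', rfl, hxy'⟩ := (pairIntroducedAt_expand_inl_iff hinj).1 hxyq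
    rw [hiu i' ⟨runStart_strictMono.lt_iff_lt.1 hq, hxy'⟩]
  · exact existsUnique_pairIntroducedAt (existsUnique_mem_expand_inl_inr hF hinj hlt hpart x o')
  · exact (existsUnique_congr fun _ => and_congr_right' pairIntroducedAt_comm).1
      (existsUnique_pairIntroducedAt (existsUnique_mem_expand_inl_inr hF hinj hlt hpart y o))
  · exact existsUnique_pairIntroducedAt
      (existsUnique_mem_expand_inr_inr hF hinj hlt (by simpa using h))

theorem DCCD.exists_expansion [DecidableEq X] {n : ℕ} (e : Fin v ⊕ X ≃ Fin n) (hk : 2 ≤ k)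
    (hF : IsOneFactorization F m) (hinj : Function.Injective idx) (hlt : ∀ j, idx j + 1 < b)
    (hpart : ∀ x, ∃! j, x ∈ D.unchanged (idx j)) :
    ∃ D' : DCCD n k (b + Fintype.card ι * m),
      (D.IsTight → D'.IsTight) ∧ (D.IsCircular → D'.IsCircular) := by
  rw [← runStart_insertions hinj fun j => (Nat.lt_succ_self _).trans (hlt j)]
  let D' : DCCD n k (runStart (insertions idx m) b) :=
    { B := fun p => (D.expand idx F m p).map e.toEmbedding
      hb := runStart_strictMono (g := insertions idx m) D.hb
      card_block := fun p hp => by rw [card_map]; exact card_expand hk hF hinj hlt hp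
      double_change := fun p hp => by
        rw [← map_inter, card_map]; exact card_expand_inter_succ hF hinj hlt hp
      cover := fun T hT => by
        obtain ⟨y, y', hyy', rfl⟩ := card_eq_two.1 hT
        obtain ⟨p, hp, hy, hy'⟩ :=
          exists_mem_expand_pair hF hinj hlt hpart (e.symm.injective.ne hyy')
        exact ⟨p, hp, insert_subset (mem_map_equiv.2 hy)
          (singleton_subset_iff.2 (mem_map_equiv.2 hy'))⟩ }
  refine ⟨D', fun hT => D'.isTight_iff.2 fun y y' hyy' => ?_, fun hC => ?_⟩
  · simpa only [D', pairIntroducedAt_map_equiv] using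
      existsUnique_pairIntroducedAt_expand hT hF hinj hlt hpart (e.symm.injective.ne hyy')
  · obtain ⟨c, rfl⟩ := Nat.exists_eq_add_of_le' D.hb
    have hlast : runStart (insertions idx m) (c + 1) - 1 = runStart (insertions idx m) c := by
      rw [runStart_succ, insertions_eq_zero fun j => by have := hlt j; omega]; rfl
    show ((D.expand idx F m _).map _ ∩
      (D.expand idx F m (runStart (insertions idx m) 0)).map _).card = _
    rw [hlast, ← map_inter, card_map, expand_runStart, expand_runStart, disjSum_inter_disjSum,
      card_disjSum, inter_empty, card_empty, add_zero]
    exact hC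

end Expansion

theorem injective_of_existsUnique_mem {α ι : Type*} {f : ι → ℕ} {U : ℕ → Finset α}
    (hne : ∀ j, (U (f j)).Nonempty) (hpart : ∀ x, ∃! j, x ∈ U (f j)) :
    Function.Injective f :=
  fun j j' h => by
    obtain ⟨x, hx⟩ := hne j
    exact (hpart x).unique hx (h ▸ hx)

theorem choose_two_expansion {v k l : ℕ} (hk : 2 ≤ k) (hv : v = l * (k - 2)) (hl : Odd l) :
    (v + l + 1).choose 2 = v.choose 2 + (2 * k - 3) * (l * ((l + 1) / 2)) := by
  obtain ⟨t, rfl⟩ := hl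
  rw [show (2 * t + 1 + 1) / 2 = t + 1 by omega, ← Nat.cast_inj (R := ℚ)]
  subst hv
  push_cast [Nat.cast_choose_two, Nat.cast_sub hk, Nat.cast_sub (show 3 ≤ 2 * k by omega)]
  ring

theorem DCCD.blockSize_le_numPoints {v k b : ℕ} (D : DCCD v k b) : k ≤ v := by
  simpa [D.card_block 0 D.hb] using card_le_univ (D.B 0)

theorem DCCD.isEconomical_of_choose_two_eq {v v' k b x : ℕ} (D : DCCD v k b)
    (D' : DCCD v' k (b + x)) (hk : 2 ≤ k) (hc : v'.choose 2 = v.choose 2 + (2 * k - 3) * x)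
    (hE : D.IsEconomical) : D'.IsEconomical := by
  unfold DCCD.IsEconomical at hE ⊢
  have hkv : k.choose 2 ≤ v.choose 2 := Nat.choose_le_choose 2 D.blockSize_le_numPoints
  rw [hc, show v.choose 2 + (2 * k - 3) * x - k.choose 2 + (2 * k - 3) - 1 =
      v.choose 2 - k.choose 2 + (2 * k - 3) - 1 + (2 * k - 3) * x by omega,
    Nat.add_mul_div_left _ _ (by omega)]
  omega

/-- Expansion-set recursion: if a `DCCD(v,k,b)` has an expansion set of size
`l = v/(k-2)` (a family of unchanged subsets `U_{i_j} = B_{i_j} ∩ B_{i_j + 1}`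
partitioning the point set), where `v` is an odd multiple of `k - 2`, then there is a
`DCCD(v + l + 1, k, b + l·((v+k-2)/(2k-4)))`, and tightness, circularity and economy
are preserved. -/
theorem expansion_set_recursion (v k b l : ℕ) (hk : 3 ≤ k)
    (hdvd : (k - 2) ∣ v) (hl : l = v / (k - 2)) (hodd : Odd l)
    (D : DCCD v k b) (idx : Fin l → ℕ)
    (hlt : ∀ j, idx j + 1 < b)
    (hpart : ∀ x : Fin v, ∃! j : Fin l, x ∈ D.B (idx j) ∩ D.B (idx j + 1)) :
    ∃ D' : DCCD (v + l + 1) k (b + (v / (k - 2)) * ((v + k - 2) / (2 * k - 4))),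
      (D.IsTight → D'.IsTight) ∧
      (D.IsCircular → D'.IsCircular) ∧
      (D.IsEconomical → D'.IsEconomical) := by
  have : NeZero l := ⟨hodd.pos.ne'⟩
  have hv : v = l * (k - 2) := by rw [hl, Nat.div_mul_cancel hdvd]
  have hN : b + v / (k - 2) * ((v + k - 2) / (2 * k - 4)) =
      b + Fintype.card (Fin l) * ((l + 1) / 2) := by
    rw [Fintype.card_fin, ← hl, show v + k - 2 = (l + 1) * (k - 2) by rw [hv]; ring_nf; omega,
      show 2 * k - 4 = 2 * (k - 2) by omega, Nat.mul_div_mul_right _ _ (by omega)]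
  have hinj : Function.Injective idx := injective_of_existsUnique_mem (U := D.unchanged)
    (fun j => card_pos.1 (by rw [D.card_unchanged (hlt j)]; omega)) hpart
  have hX : Fintype.card (Fin v ⊕ Option (ZMod l)) = v + l + 1 := by simp [add_assoc]
  obtain ⟨D', hT, hC⟩ := D.exists_expansion (Fintype.equivFinOfCardEq hX) (by omega)
    ((isOneFactorization_patternedEdge hodd).comp_equiv (ZMod.finEquiv l).toEquiv) hinj hlt hpart
  rw [hN]
  refine ⟨D', hT, hC, D.isEconomical_of_choose_two_eq D' (by omega) ?_⟩
  rw [Fintype.card_fin]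
  exact choose_two_expansion (by omega) hv hodd
end

section
/- Replacing each element x of a tight circular single change covering design CSCCD(2k'-1, k', 2k'-1) over Z_{2k'-1} by the pair {2x, 2x+1} in Z_{4k'-2} yields a tight circular double change covering design CDCCD(4k'-2, 2k', 2k'-1): consecutive blocks differ in exactly two elements, and every pair of Z_{4k'-2} is covered exactly once. -/
/-- The `i`-th block of the doubled design: each element `x` of the McSorley block
`{i, i+1, ..., i+k'-1} ⊆ ℤ/(2k'-1)` is replaced by the pair `{2x, 2x+1} ⊆ ℤ/(4k'-2)`. -/
def doubledBlock (k' i : ℕ) : Finset (ZMod (4 * k' - 2)) :=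
  (Finset.range k').biUnion (fun j =>
    {((2 * ((i + j) % (2 * k' - 1)) : ℕ) : ZMod (4 * k' - 2)),
     ((2 * ((i + j) % (2 * k' - 1)) + 1 : ℕ) : ZMod (4 * k' - 2))})

lemma mem_doubledBlock {k' : ℕ} (hk' : 2 ≤ k') (i : ℕ) (y : ZMod (4 * k' - 2)) :
    y ∈ doubledBlock k' i ↔
      (((y.val / 2 : ℕ) : ZMod (2 * k' - 1)) - (i : ZMod (2 * k' - 1))).val < k' := by
  haveI : NeZero (2 * k' - 1) := ⟨by omega⟩
  haveI : NeZero (4 * k' - 2) := ⟨by omega⟩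
  constructor
  · intro hy
    simp only [doubledBlock, Finset.mem_biUnion, Finset.mem_range, Finset.mem_insert,
      Finset.mem_singleton] at hy
    obtain ⟨j, hj, hy⟩ := hy
    have hm : (i + j) % (2 * k' - 1) < 2 * k' - 1 := Nat.mod_lt _ (by omega)
    have hval : y.val = 2 * ((i + j) % (2 * k' - 1)) ∨
        y.val = 2 * ((i + j) % (2 * k' - 1)) + 1 := by
      rcases hy with h | h <;> [left; right] <;> rw [h, ZMod.val_cast_of_lt (by omega)]
    have hdiv : y.val / 2 = (i + j) % (2 * k' - 1) := by omega
    rw [hdiv]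
    have hc : (((i + j) % (2 * k' - 1) : ℕ) : ZMod (2 * k' - 1)) =
        (i : ZMod (2 * k' - 1)) + (j : ℕ) := by
      rw [ZMod.natCast_mod]; push_cast; ring
    rw [hc, add_sub_cancel_left, ZMod.val_cast_of_lt (by omega)]
    exact hj
  · intro h
    set m := y.val / 2 with hmdef
    have hylt : y.val < 4 * k' - 2 := ZMod.val_lt y
    have hmlt : m < 2 * k' - 1 := by omega
    set j := (((m : ℕ) : ZMod (2 * k' - 1)) - (i : ZMod (2 * k' - 1))).val with hjdef
    have hjk : j < k' := h
    have hc : ((i + j : ℕ) : ZMod (2 * k' - 1)) = ((m : ℕ) : ZMod (2 * k' - 1)) := by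
      push_cast
      rw [hjdef, ZMod.natCast_rightInverse _]
      ring
    have hm2 : m = (i + j) % (2 * k' - 1) := by
      have e1 : ((m : ℕ) : ZMod (2 * k' - 1)).val = m % (2 * k' - 1) := ZMod.val_natCast _ m
      have e2 : ((i + j : ℕ) : ZMod (2 * k' - 1)).val = (i + j) % (2 * k' - 1) :=
        ZMod.val_natCast _ _
      rw [hc, e1, Nat.mod_eq_of_lt hmlt] at e2
      exact e2
    refine Finset.mem_biUnion.mpr ⟨j, Finset.mem_range.mpr hjk, ?_⟩
    have hyy : y = ((y.val : ℕ) : ZMod (4 * k' - 2)) := (ZMod.natCast_rightInverse y).symm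
    have hy2 : y.val = 2 * m ∨ y.val = 2 * m + 1 := by omega
    simp only [Finset.mem_insert, Finset.mem_singleton, ← hm2]
    rcases hy2 with h2 | h2
    · exact Or.inl (by rw [hyy, h2])
    · exact Or.inr (by rw [hyy, h2])

lemma doubledBlock_eq_filter {k' : ℕ} [NeZero (4 * k' - 2)] (hk' : 2 ≤ k') (i : ℕ) :
    doubledBlock k' i = Finset.univ.filter
      (fun y : ZMod (4 * k' - 2) =>
        (((y.val / 2 : ℕ) : ZMod (2 * k' - 1)) - (i : ZMod (2 * k' - 1))).val < k') := by
  ext y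
  simp [mem_doubledBlock hk' i y]

lemma card_double {k' : ℕ} [NeZero (2 * k' - 1)] [NeZero (4 * k' - 2)] (hk' : 2 ≤ k') (p : ZMod (2 * k' - 1) → Prop) [DecidablePred p] :
    (Finset.univ.filter
      (fun y : ZMod (4 * k' - 2) => p ((y.val / 2 : ℕ) : ZMod (2 * k' - 1)))).card
      = 2 * (Finset.univ.filter p).card := by
  have hinj : ∀ a : ℕ, a < 4 * k' - 2 → ∀ b : ℕ, b < 4 * k' - 2 →
      ((a : ℕ) : ZMod (4 * k' - 2)) = ((b : ℕ) : ZMod (4 * k' - 2)) → a = b := by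
    intro a ha b hb h
    have := congrArg ZMod.val h
    rwa [ZMod.val_cast_of_lt ha, ZMod.val_cast_of_lt hb] at this
  have key : Finset.univ.filter
      (fun y : ZMod (4 * k' - 2) => p ((y.val / 2 : ℕ) : ZMod (2 * k' - 1)))
      = (Finset.univ.filter p).biUnion (fun m =>
        {((2 * m.val : ℕ) : ZMod (4 * k' - 2)), ((2 * m.val + 1 : ℕ) : ZMod (4 * k' - 2))}) := by
    ext y
    simp only [Finset.mem_filter, Finset.mem_univ, true_and, Finset.mem_biUnion,
      Finset.mem_insert, Finset.mem_singleton]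
    constructor
    · intro hp
      refine ⟨((y.val / 2 : ℕ) : ZMod (2 * k' - 1)), hp, ?_⟩
      have hylt : y.val < 4 * k' - 2 := ZMod.val_lt y
      have hv : (((y.val / 2 : ℕ) : ZMod (2 * k' - 1))).val = y.val / 2 :=
        ZMod.val_cast_of_lt (by omega)
      have hyy : y = ((y.val : ℕ) : ZMod (4 * k' - 2)) := (ZMod.natCast_rightInverse y).symm
      rw [hv]
      rcases Nat.mod_two_eq_zero_or_one y.val with h | h
      · exact Or.inl (hyy.trans (congrArg _ (by omega : y.val = 2 * (y.val / 2))))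
      · exact Or.inr (hyy.trans (congrArg _ (by omega : y.val = 2 * (y.val / 2) + 1)))
    · rintro ⟨m, hm, h | h⟩ <;>
      · have hmlt : m.val < 2 * k' - 1 := ZMod.val_lt m
        have hv : y.val = 2 * m.val ∨ y.val = 2 * m.val + 1 := by
          rw [h, ZMod.val_cast_of_lt (by omega)]; simp
        have : y.val / 2 = m.val := by omega
        rw [this, ZMod.natCast_rightInverse m]
        exact hm
  rw [key, Finset.card_biUnion]
  · rw [Finset.sum_congr rfl (fun m _ => ?_), Finset.sum_const, smul_eq_mul, mul_comm]
    have hmlt : m.val < 2 * k' - 1 := ZMod.val_lt m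
    rw [Finset.card_insert_of_notMem, Finset.card_singleton]
    simp only [Finset.mem_singleton]
    intro h
    have := hinj _ (by omega) _ (by omega) h
    omega
  · intro m _ m' _ hmm
    simp only [Finset.disjoint_left, Finset.mem_insert, Finset.mem_singleton]
    have hmlt : m.val < 2 * k' - 1 := ZMod.val_lt m
    have hmlt' : m'.val < 2 * k' - 1 := ZMod.val_lt m'
    rintro x (rfl | rfl) h <;>
    · have hne : m.val ≠ m'.val := fun h => hmm (ZMod.val_injective _ h)
      rcases h with h | h <;>
      · have := hinj _ (by omega) _ (by omega) h
        omega

lemma card_val_filter {k' : ℕ} [NeZero (2 * k' - 1)] (hk' : 2 ≤ k') (q : ℕ → Prop) [DecidablePred q] :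
    (Finset.univ.filter (fun w : ZMod (2 * k' - 1) => q w.val)).card
      = ((Finset.range (2 * k' - 1)).filter q).card := by
  refine Finset.card_nbij' (fun w => w.val) (fun a => (a : ZMod (2 * k' - 1))) ?_ ?_ ?_ ?_
  · intro w hw
    simp only [Finset.mem_coe, Finset.mem_filter, Finset.mem_univ, true_and, Finset.mem_range] at *
    exact ⟨ZMod.val_lt w, hw⟩
  · intro a ha
    simp only [Finset.mem_coe, Finset.mem_filter, Finset.mem_univ, true_and, Finset.mem_range] at *
    rw [ZMod.val_cast_of_lt ha.1]
    exact ha.2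
  · intro w _; exact ZMod.natCast_rightInverse w
  · intro a ha
    simp only [Finset.mem_coe, Finset.mem_filter, Finset.mem_range] at ha
    exact ZMod.val_cast_of_lt ha.1

lemma cast_pred {k' : ℕ} (hk' : 2 ≤ k') :
    ((2 * k' - 2 : ℕ) : ZMod (2 * k' - 1)) = -1 := by
  have h3 : ((2 * k' - 2 : ℕ) : ZMod (2 * k' - 1)) + ((1 : ℕ) : ZMod (2 * k' - 1)) = 0 := by
    rw [← Nat.cast_add, show 2 * k' - 2 + 1 = 2 * k' - 1 by omega, ZMod.natCast_self]
  simpa using eq_neg_of_add_eq_zero_left h3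

lemma val_sub_one {k' : ℕ} (hk' : 2 ≤ k') (w : ZMod (2 * k' - 1)) :
    (w - 1).val = (w.val + (2 * k' - 2)) % (2 * k' - 1) := by
  haveI : NeZero (2 * k' - 1) := ⟨by omega⟩
  have : w - 1 = w + ((2 * k' - 2 : ℕ) : ZMod (2 * k' - 1)) := by
    rw [cast_pred hk']; ring
  rw [this, ZMod.val_add, ZMod.val_cast_of_lt (by omega)]

lemma val_add_one {k' : ℕ} (hk' : 2 ≤ k') (w : ZMod (2 * k' - 1)) :
    (w + 1).val = (w.val + 1) % (2 * k' - 1) := by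
  haveI : NeZero (2 * k' - 1) := ⟨by omega⟩
  haveI : Fact (1 < 2 * k' - 1) := ⟨by omega⟩
  rw [ZMod.val_add, ZMod.val_one]

lemma part1 {k' : ℕ} (hk' : 2 ≤ k') (i : ℕ) (hi : i < 2 * k' - 1) :
    (doubledBlock k' i ∩ doubledBlock k' ((i + 1) % (2 * k' - 1))).card = 2 * k' - 2 := by
  haveI : NeZero (2 * k' - 1) := ⟨by omega⟩
  haveI : NeZero (4 * k' - 2) := ⟨by omega⟩
  have hcast : (((i + 1) % (2 * k' - 1) : ℕ) : ZMod (2 * k' - 1)) =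
      (i : ZMod (2 * k' - 1)) + 1 := by
    rw [ZMod.natCast_mod]; push_cast; ring
  rw [doubledBlock_eq_filter hk' i, doubledBlock_eq_filter hk' ((i + 1) % (2 * k' - 1)),
    ← Finset.filter_and]
  simp only [hcast]
  rw [card_double hk' (fun m : ZMod (2 * k' - 1) =>
    (m - (i : ZMod (2 * k' - 1))).val < k' ∧ (m - ((i : ZMod (2 * k' - 1)) + 1)).val < k')]
  have himg : Finset.univ.filter (fun m : ZMod (2 * k' - 1) =>
      (m - (i : ZMod (2 * k' - 1))).val < k' ∧ (m - ((i : ZMod (2 * k' - 1)) + 1)).val < k')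
      = (Finset.univ.filter (fun w : ZMod (2 * k' - 1) => w.val < k' ∧ (w - 1).val < k')).image
        (· + (i : ZMod (2 * k' - 1))) := by
    ext m
    simp only [Finset.mem_filter, Finset.mem_univ, true_and, Finset.mem_image]
    constructor
    · rintro ⟨h1, h2⟩
      refine ⟨m - (i : ZMod (2 * k' - 1)), ⟨h1, ?_⟩, by ring⟩
      rw [show m - (i : ZMod (2 * k' - 1)) - 1 = m - ((i : ZMod (2 * k' - 1)) + 1) from by ring]
      exact h2
    · rintro ⟨w, ⟨h1, h2⟩, rfl⟩
      constructor
      · rw [show w + (i : ZMod (2 * k' - 1)) - i = w from by ring]; exact h1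
      · rw [show w + (i : ZMod (2 * k' - 1)) - ((i : ZMod (2 * k' - 1)) + 1) = w - 1 from by ring]
        exact h2
  rw [himg, Finset.card_image_of_injective _ (add_left_injective _)]
  simp only [val_sub_one hk']
  rw [card_val_filter hk' (fun a => a < k' ∧ (a + (2 * k' - 2)) % (2 * k' - 1) < k')]
  have hIco : (Finset.range (2 * k' - 1)).filter
      (fun a => a < k' ∧ (a + (2 * k' - 2)) % (2 * k' - 1) < k') = Finset.Ico 1 k' := by
    ext a
    simp only [Finset.mem_filter, Finset.mem_range, Finset.mem_Ico]
    constructor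
    · rintro ⟨ha, h1, h2⟩
      refine ⟨?_, h1⟩
      by_contra h0
      have ha0 : a = 0 := by omega
      subst ha0
      rw [Nat.mod_eq_of_lt (by omega)] at h2
      omega
    · rintro ⟨h1, h2⟩
      have e : a + (2 * k' - 2) = (2 * k' - 1) + (a - 1) := by omega
      rw [e, Nat.add_mod_left, Nat.mod_eq_of_lt (by omega)]
      omega
  rw [hIco, Nat.card_Ico]
  omega

lemma key_lemma {k' : ℕ} [NeZero (2 * k' - 1)] (hk' : 2 ≤ k') (a b : ZMod (2 * k' - 1))
    (hd : (b - a).val ≤ k' - 1) (i : ℕ) :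
    (((a - (i : ZMod (2 * k' - 1))).val < k' ∧ (b - (i : ZMod (2 * k' - 1))).val < k') ∧
      (¬ (a - ((i : ZMod (2 * k' - 1)) - 1)).val < k' ∨
       ¬ (b - ((i : ZMod (2 * k' - 1)) - 1)).val < k'))
    ↔ (i : ZMod (2 * k' - 1)) =
        a - ((k' - 1 - (b - a).val : ℕ) : ZMod (2 * k' - 1)) := by
  have hdn : (b - a).val < 2 * k' - 1 := ZMod.val_lt _
  have hun : (a - (i : ZMod (2 * k' - 1))).val < 2 * k' - 1 := ZMod.val_lt _
  have hvv : (b - (i : ZMod (2 * k' - 1))).val =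
      ((a - (i : ZMod (2 * k' - 1))).val + (b - a).val) % (2 * k' - 1) := by
    rw [show b - (i : ZMod (2 * k' - 1)) = (a - (i : ZMod (2 * k' - 1))) + (b - a) from by ring,
      ZMod.val_add]
  have h1 : a - ((i : ZMod (2 * k' - 1)) - 1) = (a - (i : ZMod (2 * k' - 1))) + 1 := by ring
  have h2 : b - ((i : ZMod (2 * k' - 1)) - 1) = (b - (i : ZMod (2 * k' - 1))) + 1 := by ring
  rw [h1, h2, val_add_one hk', val_add_one hk', hvv]
  set u := (a - (i : ZMod (2 * k' - 1))).val with hu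
  set d := (b - a).val with hdd
  constructor
  · rintro ⟨⟨hu1, hv1⟩, hor⟩
    have hmod1 : (u + 1) % (2 * k' - 1) = u + 1 := Nat.mod_eq_of_lt (by omega)
    have hmod2 : ((u + d) % (2 * k' - 1) + 1) % (2 * k' - 1) = (u + d) % (2 * k' - 1) + 1 :=
      Nat.mod_eq_of_lt (by omega)
    rw [hmod1, hmod2] at hor
    have hueq : u = k' - 1 - d := by
      rcases Nat.lt_or_ge (u + d) (2 * k' - 1) with hlt | hge
      · rw [Nat.mod_eq_of_lt hlt] at hv1 hor; omega
      · have he : (u + d) % (2 * k' - 1) = u + d - (2 * k' - 1) := by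
          rw [Nat.mod_eq_sub_mod hge, Nat.mod_eq_of_lt (by omega)]
        rw [he] at hv1 hor; omega
    have hai : a - (i : ZMod (2 * k' - 1)) = ((k' - 1 - d : ℕ) : ZMod (2 * k' - 1)) :=
      calc a - (i : ZMod (2 * k' - 1)) = ((u : ℕ) : ZMod (2 * k' - 1)) :=
            (ZMod.natCast_rightInverse _).symm
        _ = ((k' - 1 - d : ℕ) : ZMod (2 * k' - 1)) := by rw [hueq]
    rw [show (i : ZMod (2 * k' - 1)) = a - (a - (i : ZMod (2 * k' - 1))) from by ring, hai]
  · intro hi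
    have hui : u = k' - 1 - d := by
      rw [hu, hi, show a - (a - ((k' - 1 - d : ℕ) : ZMod (2 * k' - 1)))
          = ((k' - 1 - d : ℕ) : ZMod (2 * k' - 1)) from by ring,
        ZMod.val_cast_of_lt (by omega)]
    rw [hui]
    have e1 : (k' - 1 - d) + d = k' - 1 := by omega
    refine ⟨⟨by omega, ?_⟩, Or.inr ?_⟩
    · rw [e1, Nat.mod_eq_of_lt (by omega)]; omega
    · rw [e1, Nat.mod_eq_of_lt (show k' - 1 < 2 * k' - 1 by omega),
        Nat.mod_eq_of_lt (by omega)]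
      omega

lemma part2_aux {k' : ℕ} (hk' : 2 ≤ k') (y z : ZMod (4 * k' - 2))
    (hd : (((z.val / 2 : ℕ) : ZMod (2 * k' - 1)) - ((y.val / 2 : ℕ) : ZMod (2 * k' - 1))).val
      ≤ k' - 1) :
    ∃! i, i < 2 * k' - 1 ∧ ({y, z} : Finset (ZMod (4 * k' - 2))) ⊆ doubledBlock k' i ∧
      ∃ x ∈ ({y, z} : Finset (ZMod (4 * k' - 2))),
        x ∉ doubledBlock k' ((i + (2 * k' - 1) - 1) % (2 * k' - 1)) := by
  haveI : NeZero (2 * k' - 1) := ⟨by omega⟩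
  haveI : NeZero (4 * k' - 2) := ⟨by omega⟩
  have key : ∀ i : ℕ,
      (({y, z} : Finset (ZMod (4 * k' - 2))) ⊆ doubledBlock k' i ∧
        ∃ x ∈ ({y, z} : Finset (ZMod (4 * k' - 2))),
          x ∉ doubledBlock k' ((i + (2 * k' - 1) - 1) % (2 * k' - 1)))
      ↔ (i : ZMod (2 * k' - 1)) =
          ((y.val / 2 : ℕ) : ZMod (2 * k' - 1)) -
            ((k' - 1 - (((z.val / 2 : ℕ) : ZMod (2 * k' - 1)) -
              ((y.val / 2 : ℕ) : ZMod (2 * k' - 1))).val : ℕ) : ZMod (2 * k' - 1)) := by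
    intro i
    have hprev : (((i + (2 * k' - 1) - 1) % (2 * k' - 1) : ℕ) : ZMod (2 * k' - 1)) =
        (i : ZMod (2 * k' - 1)) - 1 := by
      rw [ZMod.natCast_mod, show i + (2 * k' - 1) - 1 = i + (2 * k' - 2) from by omega,
        Nat.cast_add, cast_pred hk']
      ring
    have hsub : ({y, z} : Finset (ZMod (4 * k' - 2))) ⊆ doubledBlock k' i ↔
        (((y.val / 2 : ℕ) : ZMod (2 * k' - 1)) - (i : ZMod (2 * k' - 1))).val < k' ∧
        (((z.val / 2 : ℕ) : ZMod (2 * k' - 1)) - (i : ZMod (2 * k' - 1))).val < k' := by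
      rw [Finset.insert_subset_iff, Finset.singleton_subset_iff, mem_doubledBlock hk',
        mem_doubledBlock hk']
    have hex : (∃ x ∈ ({y, z} : Finset (ZMod (4 * k' - 2))),
        x ∉ doubledBlock k' ((i + (2 * k' - 1) - 1) % (2 * k' - 1))) ↔
        (¬ (((y.val / 2 : ℕ) : ZMod (2 * k' - 1)) - ((i : ZMod (2 * k' - 1)) - 1)).val < k' ∨
         ¬ (((z.val / 2 : ℕ) : ZMod (2 * k' - 1)) - ((i : ZMod (2 * k' - 1)) - 1)).val < k') := by
      constructor
      · rintro ⟨x, hx1, hx2⟩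
        rw [mem_doubledBlock hk', hprev] at hx2
        rcases Finset.mem_insert.mp hx1 with rfl | hx1
        · exact Or.inl hx2
        · rw [Finset.mem_singleton] at hx1; subst hx1; exact Or.inr hx2
      · rintro (h | h)
        · exact ⟨y, Finset.mem_insert_self _ _,
            by rw [mem_doubledBlock hk', hprev]; exact h⟩
        · exact ⟨z, by simp, by rw [mem_doubledBlock hk', hprev]; exact h⟩
    rw [hsub, hex]
    exact key_lemma hk' _ _ hd i
  set c := ((y.val / 2 : ℕ) : ZMod (2 * k' - 1)) -
    ((k' - 1 - (((z.val / 2 : ℕ) : ZMod (2 * k' - 1)) -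
      ((y.val / 2 : ℕ) : ZMod (2 * k' - 1))).val : ℕ) : ZMod (2 * k' - 1)) with hc
  refine ⟨c.val, ⟨ZMod.val_lt c, (key c.val).mpr (ZMod.natCast_rightInverse c)⟩, ?_⟩
  rintro j ⟨hj1, hj2⟩
  have hjc := (key j).mp hj2
  calc j = ((j : ZMod (2 * k' - 1))).val := (ZMod.val_cast_of_lt hj1).symm
    _ = c.val := by rw [hjc]

/-- Doubling the tight `CSCCD(2k'-1, k', 2k'-1)` yields a tight circular
`CDCCD(4k'-2, 2k', 2k'-1)`: cyclically consecutive blocks intersect in `2k' - 2`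
elements (differ in exactly two), and every pair of `ℤ/(4k'-2)` is covered exactly once
(`T` is covered at `i` when `T ⊆ Bᵢ` and some element of `T` is introduced at `i`,
i.e. absent from the cyclically previous block). -/
theorem doubled_csccd_is_tight_cdccd (k' : ℕ) (hk' : 2 ≤ k') :
    (∀ i < 2 * k' - 1,
      (doubledBlock k' i ∩ doubledBlock k' ((i + 1) % (2 * k' - 1))).card = 2 * k' - 2) ∧
    (∀ T : Finset (ZMod (4 * k' - 2)), T.card = 2 →
      ∃! i, i < 2 * k' - 1 ∧ T ⊆ doubledBlock k' i ∧
        ∃ x ∈ T, x ∉ doubledBlock k' ((i + (2 * k' - 1) - 1) % (2 * k' - 1))) := by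
  haveI : NeZero (2 * k' - 1) := ⟨by omega⟩
  haveI : NeZero (4 * k' - 2) := ⟨by omega⟩
  constructor
  · exact fun i hi => part1 hk' i hi
  · intro T hT
    obtain ⟨y, z, hyz, rfl⟩ := Finset.card_eq_two.mp hT
    by_cases hd : (((z.val / 2 : ℕ) : ZMod (2 * k' - 1)) -
        ((y.val / 2 : ℕ) : ZMod (2 * k' - 1))).val ≤ k' - 1
    · exact part2_aux hk' y z hd
    · rw [Finset.pair_comm y z]
      apply part2_aux hk' z y
      push_neg at hd
      have hne : ((z.val / 2 : ℕ) : ZMod (2 * k' - 1)) -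
          ((y.val / 2 : ℕ) : ZMod (2 * k' - 1)) ≠ 0 := by
        intro h0
        rw [h0, ZMod.val_zero] at hd
        omega
      have hneg : (((y.val / 2 : ℕ) : ZMod (2 * k' - 1)) -
          ((z.val / 2 : ℕ) : ZMod (2 * k' - 1))).val
          = 2 * k' - 1 - (((z.val / 2 : ℕ) : ZMod (2 * k' - 1)) -
            ((y.val / 2 : ℕ) : ZMod (2 * k' - 1))).val := by
        rw [show ((y.val / 2 : ℕ) : ZMod (2 * k' - 1)) - ((z.val / 2 : ℕ) : ZMod (2 * k' - 1))
          = -(((z.val / 2 : ℕ) : ZMod (2 * k' - 1)) - ((y.val / 2 : ℕ) : ZMod (2 * k' - 1)))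
          from by ring, ZMod.neg_val, if_neg hne]
      have hlt : (((z.val / 2 : ℕ) : ZMod (2 * k' - 1)) -
          ((y.val / 2 : ℕ) : ZMod (2 * k' - 1))).val < 2 * k' - 1 := ZMod.val_lt _
      omega
end
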